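/- arXiv:1411.6268 — 10 statements merged into one kernel-verified Lean document; each statement's English description precedes it below -/
import Mathlib

section
/- Fix γ, η, θ, σ, τ ∈ ℝ. Let X be an ℝ-linear operator on ℝ[X], and for each t ≥ 0 let M_t and A_t be ℝ-linear operators on ℝ[X] such that: (1) each M_t is bijective, with inverse M_t⁻¹; (2) F∘M_t = M_t∘(F + t·X) for all t ≥ 0; (3) for every polynomial p, every coefficient index j ≥ 0, and every t > 0, the function s ↦ (the j-th coefficient of M_s(p)) is differentiable at s = t with derivative equal to −(the j-th coefficient of A_t(M_t(p))); and (4) X∘F − γ·F∘X = id + η·F + θ·X + σ·F∘F + τ·X∘X. For t > 0 set H_t = A_t∘F − F∘A_t and T_t = F − t·H_t. Then H_t = M_t∘X∘M_t⁻¹ and T_t = M_t∘F∘M_t⁻¹, and consequently H_t∘T_t − γ·T_t∘H_t = id + θ·H_t + η·T_t + τ·H_t∘H_t + σ·T_t∘T_t. -/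
/-!
Differentiating the intertwining relation `X * M_s p = M_s (X * p) + s • M_s (𝕏 p)`
coefficientwise at `s = t`, with `∂ₜ M_t = -A_t M_t`, gives `(A_t F - F A_t) M_t = M_t 𝕏`,
while the relation at `s = t` itself gives `F = M_t (F + t 𝕏) M_t⁻¹`. Hence `H_t` and `T_t`
are the images of `𝕏` and `F` under conjugation by `M_t`, an algebra automorphism of
`End ℝ[X]`, which carries the commutation relation of `(𝕏, F)` to that of `(H_t, T_t)`.
-/

open Polynomial

noncomputable def F : Module.End ℝ (Polynomial ℝ) := LinearMap.mulLeft ℝ (X : Polynomial ℝ)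

open Filter Topology

/- `ℝ[X]` carries no topology, so a polynomial-valued curve is differentiated coefficient by
coefficient. -/
def HasCoeffDerivAt (f : ℝ → ℝ[X]) (f' : ℝ[X]) (t : ℝ) : Prop :=
  ∀ j, HasDerivAt (fun s => (f s).coeff j) (f'.coeff j) t

namespace HasCoeffDerivAt

variable {f g : ℝ → ℝ[X]} {f' g' : ℝ[X]} {t : ℝ}

theorem add (hf : HasCoeffDerivAt f f' t) (hg : HasCoeffDerivAt g g' t) :
    HasCoeffDerivAt (fun s => f s + g s) (f' + g') t := fun j => by
  simpa only [coeff_add] using (hf j).fun_add (hg j)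

theorem id_smul (hf : HasCoeffDerivAt f f' t) :
    HasCoeffDerivAt (fun s => s • f s) (f t + t • f') t := fun j => by
  simpa only [coeff_add, coeff_smul, smul_eq_mul, one_mul] using (hasDerivAt_id' t).fun_mul (hf j)

theorem const_mul (q : ℝ[X]) (hf : HasCoeffDerivAt f f' t) :
    HasCoeffDerivAt (fun s => q * f s) (q * f') t := fun j => by
  simp only [coeff_mul]
  exact HasDerivAt.fun_sum fun x _ => (hf x.2).const_mul _

theorem unique (hf : HasCoeffDerivAt f f' t) (hf₂ : HasCoeffDerivAt f g' t) : f' = g' :=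
  ext fun j => (hf j).unique (hf₂ j)

theorem congr_of_eventuallyEq (hf : HasCoeffDerivAt f f' t) (h : g =ᶠ[𝓝 t] f) :
    HasCoeffDerivAt g f' t := fun j =>
  (hf j).congr_of_eventuallyEq (h.mono fun _ hs => congrArg (coeff · j) hs)

end HasCoeffDerivAt

theorem F_apply (p : ℝ[X]) : F p = X * p := rfl

theorem X_mul_apply_of_F_mul_eq {M 𝕏 : Module.End ℝ ℝ[X]} {s : ℝ}
    (h : F * M = M * (F + s • 𝕏)) (p : ℝ[X]) : X * M p = M (F p) + s • M (𝕏 p) := by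
  simpa [Module.End.mul_apply, F_apply] using LinearMap.congr_fun h p

theorem commutator_mul_eq_of_hasCoeffDerivAt {M : ℝ → Module.End ℝ ℝ[X]}
    {A 𝕏 : Module.End ℝ ℝ[X]} {t : ℝ}
    (hF : ∀ᶠ s in 𝓝 t, F * M s = M s * (F + s • 𝕏))
    (hM : ∀ p, HasCoeffDerivAt (fun s => M s p) (-A (M t p)) t) :
    (A * F - F * A) * M t = M t * 𝕏 := by
  refine LinearMap.ext fun p => ?_
  have hderiv : X * -A (M t p) = -A (M t (F p)) + (M t (𝕏 p) + t • -A (M t (𝕏 p))) :=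
    ((hM p).const_mul X).unique <| ((hM (F p)).add (hM (𝕏 p)).id_smul).congr_of_eventuallyEq <|
      hF.mono fun s hs => X_mul_apply_of_F_mul_eq hs p
  have hFt := X_mul_apply_of_F_mul_eq hF.self_of_nhds p
  simp only [LinearMap.sub_apply, Module.End.mul_apply, F_apply, mul_neg] at hderiv hFt ⊢
  rw [hFt, map_add, map_smul]
  linear_combination (norm := module) hderiv

theorem eq_mul_mul_of_mul_eq_mul {α : Type*} [Monoid α] {a b m m' : α} (hm : m * m' = 1)
    (h : a * m = m * b) : a = m * b * m' := by
  rw [← h, mul_assoc, hm, mul_one]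

/-- Theorem 2.1: if `F ∘ M_t = M_t ∘ (F + t X)`, the generator `A_t` satisfies
`A_t M_t = -∂_t M_t` (coefficientwise), and `X` satisfies the quadratic commutation
equation, then `H_t = A_t∘F - F∘A_t = M_t X M_t⁻¹`, `T_t = F - t H_t = M_t F M_t⁻¹`,
and `H_t, T_t` satisfy the corresponding commutation equation. -/
theorem stmt2 (γ η θ σ τ : ℝ)
    (𝕏 : Module.End ℝ (Polynomial ℝ))
    (M Minv A : ℝ → Module.End ℝ (Polynomial ℝ))
    (hM : ∀ t : ℝ, 0 ≤ t → M t * Minv t = 1 ∧ Minv t * M t = 1)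
    (hharness : ∀ t : ℝ, 0 ≤ t → F * M t = M t * (F + t • 𝕏))
    (hderiv : ∀ (p : Polynomial ℝ) (j : ℕ) (t : ℝ), 0 < t →
      HasDerivAt (fun s : ℝ => ((M s) p).coeff j) (-(((A t) ((M t) p)).coeff j)) t)
    (hX : 𝕏 * F - γ • (F * 𝕏) = 1 + η • F + θ • 𝕏 + σ • (F * F) + τ • (𝕏 * 𝕏)) :
    ∀ t : ℝ, 0 < t → ∀ H T : Module.End ℝ (Polynomial ℝ),
      H = A t * F - F * A t → T = F - t • H →
      H = M t * 𝕏 * Minv t ∧ T = M t * F * Minv t ∧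
      H * T - γ • (T * H) = 1 + θ • H + η • T + τ • (H * H) + σ • (T * T) := by
  intro t ht H T hH hT
  obtain ⟨hMMinv, hMinvM⟩ := hM t ht.le
  let e : ℝ[X] ≃ₗ[ℝ] ℝ[X] := .ofLinearMap (M t) (Minv t) hMMinv hMinvM
  have hHe : H = e.conjAlgEquiv ℝ 𝕏 := by
    refine hH ▸ eq_mul_mul_of_mul_eq_mul hMMinv (commutator_mul_eq_of_hasCoeffDerivAt ?_ ?_)
    · filter_upwards [lt_mem_nhds ht] with s hs using hharness s hs.le
    · exact fun p j => by simpa only [coeff_neg] using hderiv p j t ht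
  have hTe : T = e.conjAlgEquiv ℝ F := by
    rw [hT, hHe, sub_eq_iff_eq_add, ← map_smul, ← map_add]
    exact eq_mul_mul_of_mul_eq_mul hMMinv (hharness t ht.le)
  refine ⟨hHe, hTe, ?_⟩
  have hXe := congrArg (e.conjAlgEquiv ℝ) hX
  simp only [map_sub, map_add, map_mul, map_smul, map_one] at hXe
  rw [hHe, hTe, hXe]
  abel
end

section
/- The operator H_t satisfies (1+σt)·(H_t∘F) = id + η·F + σ·F∘F + (θ−ηt)·H_t − σ(t+τ)·(F∘H_t) + (t+τ)(1+σt)·(H_t∘H_t). Moreover, H_t is the unique ℝ-linear operator H on ℝ[X] with H(1) = 0 satisfying this equation. -/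
open Polynomial Finset

noncomputable def Gpoly (c : ℕ → ℝ) (m : ℕ) : Polynomial ℝ :=
  ∑ k ∈ Icc 1 m, C (c k) * X ^ (m - k)

lemma coeff_Gpoly (c : ℕ → ℝ) (m j : ℕ) :
    (Gpoly c m).coeff j = if j + 1 ≤ m then c (m - j) else 0 := by
  unfold Gpoly
  rw [finset_sum_coeff]
  simp only [coeff_C_mul, coeff_X_pow]
  split_ifs with h
  · rw [Finset.sum_eq_single (m - j)]
    · rw [if_pos (by omega), mul_one]
    · intro k hk hne
      simp only [Finset.mem_Icc] at hk
      rw [if_neg (by omega), mul_zero]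
    · intro h2
      exact absurd (Finset.mem_Icc.mpr ⟨by omega, by omega⟩) h2
  · apply Finset.sum_eq_zero
    intro k hk
    simp only [Finset.mem_Icc] at hk
    rw [if_neg (by omega), mul_zero]

lemma coeff_X_mul_Gpoly (c : ℕ → ℝ) (n j : ℕ) :
    (X * Gpoly c n).coeff j = if 1 ≤ j ∧ j ≤ n then c (n + 1 - j) else 0 := by
  rcases j with _ | j
  · simp [Polynomial.mul_coeff_zero]
  · rw [coeff_X_mul, coeff_Gpoly]
    split_ifs with h1 h2 h2
    · congr 1; omega
    · omega
    · omega
    · rfl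

lemma core (t η θ σ τ : ℝ) (c : ℕ → ℝ) (hc1 : c 1 = 1)
    (hc : ∀ k : ℕ, 1 ≤ k →
      (1 + σ * t) * c (k + 1) =
        (θ - η * t) * c k +
          (t + τ) * ((∑ j ∈ Ico 1 k, c j * c (k - j)) +
            η * ∑ j ∈ range k, c (j + 1) * c (k - j) +
            σ * ∑ j ∈ range k, c (j + 2) * c (k - j)))
    (n : ℕ) :
    C (1 + σ * t) * Gpoly c (n + 1) =
      C (1 + σ * t) * X ^ n + C (θ - η * t) * Gpoly c n
        - C (σ * (t + τ)) * (X * Gpoly c n)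
        + C (t + τ) * ∑ k ∈ Icc 1 n, C (c k) *
            (Gpoly c (n - k) + C η * Gpoly c (n + 1 - k) + C σ * Gpoly c (n + 2 - k)) := by
  apply Polynomial.ext
  intro j
  simp only [coeff_add, coeff_sub, coeff_C_mul, coeff_X_pow, finset_sum_coeff,
    coeff_Gpoly, coeff_X_mul_Gpoly]
  rcases le_or_gt j n with hj | hj
  · obtain ⟨m, rfl⟩ : ∃ m, n = j + m := ⟨n - j, by omega⟩
    -- simplify outer indicators
    rw [if_pos (by omega : j + 1 ≤ j + m + 1), show j + m + 1 - j = m + 1 by omega]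
    -- split inner sum
    have hsplit : ∀ k ∈ Icc 1 (j + m),
        c k * ((if j + 1 ≤ j + m - k then c (j + m - k - j) else 0)
          + η * (if j + 1 ≤ j + m + 1 - k then c (j + m + 1 - k - j) else 0)
          + σ * (if j + 1 ≤ j + m + 2 - k then c (j + m + 2 - k - j) else 0)) =
        c k * (if k + 1 ≤ m then c (m - k) else 0)
          + η * (c k * (if k ≤ m then c (m + 1 - k) else 0))
          + σ * (c k * (if k ≤ m + 1 then c (m + 2 - k) else 0)) := by
      intro k hk
      simp only [Finset.mem_Icc] at hk
      have e1 : (if j + 1 ≤ j + m - k then c (j + m - k - j) else 0)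
          = (if k + 1 ≤ m then c (m - k) else 0) := by
        split_ifs with h1 h2 h2
        · congr 1; omega
        · omega
        · omega
        · rfl
      have e2 : (if j + 1 ≤ j + m + 1 - k then c (j + m + 1 - k - j) else 0)
          = (if k ≤ m then c (m + 1 - k) else 0) := by
        split_ifs with h1 h2 h2
        · congr 1; omega
        · omega
        · omega
        · rfl
      have e3 : (if j + 1 ≤ j + m + 2 - k then c (j + m + 2 - k - j) else 0)
          = (if k ≤ m + 1 then c (m + 2 - k) else 0) := by
        split_ifs with h1 h2 h2
        · congr 1; omega
        · omega
        · omega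
        · rfl
      rw [e1, e2, e3]; ring
    rw [Finset.sum_congr rfl hsplit, Finset.sum_add_distrib, Finset.sum_add_distrib,
      ← Finset.mul_sum, ← Finset.mul_sum]
    -- truncate the three sums
    have hA : (∑ k ∈ Icc 1 (j + m), c k * (if k + 1 ≤ m then c (m - k) else 0))
        = ∑ k ∈ Icc 1 (m - 1), c k * c (m - k) := by
      rw [← Finset.sum_subset (Finset.Icc_subset_Icc_right (by omega : m - 1 ≤ j + m))]
      · exact Finset.sum_congr rfl fun k hk => by
          simp only [Finset.mem_Icc] at hk
          rw [if_pos (by omega)]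
      · intro k hk hk'
        simp only [Finset.mem_Icc] at hk hk'
        rw [if_neg (by omega), mul_zero]
    have hB : (∑ k ∈ Icc 1 (j + m), c k * (if k ≤ m then c (m + 1 - k) else 0))
        = ∑ k ∈ Icc 1 m, c k * c (m + 1 - k) := by
      rw [← Finset.sum_subset (Finset.Icc_subset_Icc_right (by omega : m ≤ j + m))]
      · exact Finset.sum_congr rfl fun k hk => by
          simp only [Finset.mem_Icc] at hk
          rw [if_pos (by omega)]
      · intro k hk hk'
        simp only [Finset.mem_Icc] at hk hk'
        rw [if_neg (by omega), mul_zero]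
    rw [hA, hB]
    rcases Nat.eq_zero_or_pos m with rfl | hm
    · -- m = 0
      have hC0 : (∑ k ∈ Icc 1 (j + 0), c k * (if k ≤ 0 + 1 then c (0 + 2 - k) else 0))
          = if 1 ≤ j then c 1 * c 1 else 0 := by
        rcases Nat.eq_zero_or_pos j with rfl | hj1
        · simp
        · rw [if_pos (by omega : 1 ≤ j), Finset.sum_eq_single 1]
          · rw [if_pos (by omega)]
          · intro k hk hne
            simp only [Finset.mem_Icc] at hk
            rw [if_neg (by omega), mul_zero]
          · intro h2
            exact absurd (Finset.mem_Icc.mpr ⟨le_refl 1, by omega⟩) h2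
      rw [hC0, if_pos (by omega : j = j + 0)]
      rw [Finset.Icc_eq_empty (by omega : ¬(1:ℕ) ≤ 0 - 1),
        Finset.sum_empty, Finset.sum_empty, if_neg (by omega)]
      rcases Nat.eq_zero_or_pos j with rfl | hj1
      · rw [if_neg (by omega), if_neg (by omega)]
        rw [hc1]; ring
      · rw [if_pos (by omega : 1 ≤ j ∧ j ≤ j + 0), if_pos (by omega : 1 ≤ j)]
        rw [hc1]; ring
    · -- m ≥ 1
      have hIco : (∑ i ∈ Ico 1 m, c i * c (m - i)) = ∑ k ∈ Icc 1 (m - 1), c k * c (m - k) := by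
        have hset : Ico 1 m = Icc 1 (m - 1) := by
          ext x; simp only [Finset.mem_Ico, Finset.mem_Icc]; omega
        rw [hset]
      have hR1 : (∑ i ∈ range m, c (i + 1) * c (m - i)) = ∑ k ∈ Icc 1 m, c k * c (m + 1 - k) := by
        rw [← Finset.Ico_add_one_right_eq_Icc, Finset.sum_Ico_eq_sum_range]
        simp only [show m + 1 - 1 = m from rfl]
        exact Finset.sum_congr rfl fun i hi => by
          simp only [Finset.mem_range] at hi
          rw [show m + 1 - (1 + i) = m - i by omega, show 1 + i = i + 1 by omega]
      have hR2 : (∑ i ∈ range m, c (i + 2) * c (m - i)) = ∑ k ∈ Icc 2 (m + 1), c k * c (m + 2 - k) := by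
        rw [← Finset.Ico_add_one_right_eq_Icc, Finset.sum_Ico_eq_sum_range]
        rw [show m + 1 + 1 - 2 = m by omega]
        exact Finset.sum_congr rfl fun i hi => by
          simp only [Finset.mem_range] at hi
          rw [show m + 2 - (2 + i) = m - i by omega, show 2 + i = i + 2 by omega]
      have hcm := hc m hm
      rw [hIco, hR1, hR2] at hcm
      rw [if_neg (by omega : ¬ j = j + m), if_pos (by omega : j + 1 ≤ j + m),
        show j + m - j = m by omega]
      rcases Nat.eq_zero_or_pos j with rfl | hj1
      · -- j = 0, truncation of third sum at m, then reverse
        have hC : (∑ k ∈ Icc 1 (0 + m), c k * (if k ≤ m + 1 then c (m + 2 - k) else 0))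
            = ∑ k ∈ Icc 2 (m + 1), c k * c (m + 2 - k) := by
          rw [show (0 + m) = m by omega]
          have step1 : (∑ k ∈ Icc 1 m, c k * (if k ≤ m + 1 then c (m + 2 - k) else 0))
              = ∑ k ∈ Icc 1 m, c k * c (m + 2 - k) :=
            Finset.sum_congr rfl fun k hk => by
              simp only [Finset.mem_Icc] at hk
              rw [if_pos (by omega)]
          rw [step1]
          apply Finset.sum_nbij' (i := fun k => m + 2 - k) (j := fun k => m + 2 - k)
          · intro a ha; simp only [Finset.mem_Icc] at ha ⊢; omega
          · intro a ha; simp only [Finset.mem_Icc] at ha ⊢; omega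
          · intro a ha; simp only [Finset.mem_Icc] at ha; omega
          · intro a ha; simp only [Finset.mem_Icc] at ha; omega
          · intro a ha
            simp only [Finset.mem_Icc] at ha
            rw [show m + 2 - (m + 2 - a) = a by omega, mul_comm]
        rw [hC, if_neg (by omega)]
        linear_combination hcm
      · -- j ≥ 1, truncation at m + 1, split off k = 1
        have hC : (∑ k ∈ Icc 1 (j + m), c k * (if k ≤ m + 1 then c (m + 2 - k) else 0))
            = c 1 * c (m + 1) + ∑ k ∈ Icc 2 (m + 1), c k * c (m + 2 - k) := by
          rw [← Finset.sum_subset (Finset.Icc_subset_Icc_right (by omega : m + 1 ≤ j + m))]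
          · have step1 : (∑ k ∈ Icc 1 (m + 1), c k * (if k ≤ m + 1 then c (m + 2 - k) else 0))
                = ∑ k ∈ Icc 1 (m + 1), c k * c (m + 2 - k) :=
              Finset.sum_congr rfl fun k hk => by
                simp only [Finset.mem_Icc] at hk
                rw [if_pos (by omega)]
            rw [step1]
            have hins : Icc 1 (m + 1) = insert 1 (Icc 2 (m + 1)) := by
              ext x; simp only [Finset.mem_Icc, Finset.mem_insert]; omega
            rw [hins, Finset.sum_insert (by simp)]
            rw [show m + 2 - 1 = m + 1 by omega]
          · intro k hk hk'
            simp only [Finset.mem_Icc] at hk hk'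
            rw [if_neg (by omega), mul_zero]
        rw [hC, if_pos (by omega : 1 ≤ j ∧ j ≤ j + m)]
        linear_combination hcm - σ * (t + τ) * c (m + 1) * hc1
  · -- n < j : everything vanishes
    rw [if_neg (by omega), if_neg (by omega), if_neg (by omega), if_neg (by omega),
      Finset.sum_eq_zero]
    · ring
    · intro k hk
      simp only [Finset.mem_Icc] at hk
      rw [if_neg (by omega), if_neg (by omega), if_neg (by omega)]
      ring

section Emon

variable (t η θ σ τ : ℝ) (c : ℕ → ℝ) (H : Module.End ℝ (Polynomial ℝ))

lemma H_C_mul (p : Polynomial ℝ) (a : ℝ) : H (C a * p) = C a * H p := by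
  rw [← smul_eq_C_mul, map_smul, smul_eq_C_mul]

lemma hH'_of_hH (hs : (1 + σ * t) ≠ 0)
    (hH : ∀ n : ℕ, H (X ^ n) =
      C (1 / (1 + σ * t)) * (1 + C η * X + C σ * X ^ 2) *
        ∑ k ∈ Icc 1 n, C (c k) * X ^ (n - k)) (n : ℕ) :
    C (1 + σ * t) * H (X ^ n)
      = (1 + C η * X + C σ * X ^ 2) * Gpoly c n := by
  have hCu : C (1 / (1 + σ * t)) * C (1 + σ * t) = (1 : Polynomial ℝ) := by
    rw [← C_mul, one_div, inv_mul_cancel₀ hs, C_1]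
  rw [hH n]
  show C (1 + σ * t) * (C (1 / (1 + σ * t)) * (1 + C η * X + C σ * X ^ 2) * Gpoly c n) = _
  linear_combination ((1 + C η * X + C σ * X ^ 2) * Gpoly c n) * hCu

lemma HP_of_hH (hs : (1 + σ * t) ≠ 0)
    (hH : ∀ n : ℕ, H (X ^ n) =
      C (1 / (1 + σ * t)) * (1 + C η * X + C σ * X ^ 2) *
        ∑ k ∈ Icc 1 n, C (c k) * X ^ (n - k)) (e : ℕ) :
    C (1 + σ * t) * H (X ^ e + C η * X ^ (e + 1) + C σ * X ^ (e + 2))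
      = (1 + C η * X + C σ * X ^ 2) *
          (Gpoly c e + C η * Gpoly c (e + 1) + C σ * Gpoly c (e + 2)) := by
  have h1 := hH'_of_hH t η σ c H hs hH e
  have h2 := hH'_of_hH t η σ c H hs hH (e + 1)
  have h3 := hH'_of_hH t η σ c H hs hH (e + 2)
  have hsplit : H (X ^ e + C η * X ^ (e + 1) + C σ * X ^ (e + 2))
      = H (X ^ e) + C η * H (X ^ (e + 1)) + C σ * H (X ^ (e + 2)) := by
    rw [LinearMap.map_add, LinearMap.map_add, H_C_mul, H_C_mul]
  rw [hsplit]
  linear_combination h1 + C η * h2 + C σ * h3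

lemma HHsq_of_hH (hs : (1 + σ * t) ≠ 0)
    (hH : ∀ n : ℕ, H (X ^ n) =
      C (1 / (1 + σ * t)) * (1 + C η * X + C σ * X ^ 2) *
        ∑ k ∈ Icc 1 n, C (c k) * X ^ (n - k)) (n : ℕ) :
    C (1 + σ * t) * (C (1 + σ * t) * H (H (X ^ n)))
      = (1 + C η * X + C σ * X ^ 2) * ∑ k ∈ Icc 1 n, C (c k) *
          (Gpoly c (n - k) + C η * Gpoly c (n + 1 - k) + C σ * Gpoly c (n + 2 - k)) := by
  have step1 : C (1 + σ * t) * H (X ^ n)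
      = ∑ k ∈ Icc 1 n, C (c k) * (X ^ (n - k) + C η * X ^ (n + 1 - k) + C σ * X ^ (n + 2 - k)) := by
    rw [hH'_of_hH t η σ c H hs hH n]
    unfold Gpoly
    rw [Finset.mul_sum]
    refine Finset.sum_congr rfl fun k hk => ?_
    simp only [Finset.mem_Icc] at hk
    rw [show n + 1 - k = (n - k) + 1 by omega, show n + 2 - k = (n - k) + 2 by omega,
      pow_add, pow_add]
    ring
  calc C (1 + σ * t) * (C (1 + σ * t) * H (H (X ^ n)))
      = C (1 + σ * t) * H (C (1 + σ * t) * H (X ^ n)) := by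
        rw [H_C_mul]
    _ = C (1 + σ * t) * H (∑ k ∈ Icc 1 n, C (c k) *
          (X ^ (n - k) + C η * X ^ (n + 1 - k) + C σ * X ^ (n + 2 - k))) := by rw [step1]
    _ = ∑ k ∈ Icc 1 n, C (c k) * (C (1 + σ * t) *
          H (X ^ (n - k) + C η * X ^ (n + 1 - k) + C σ * X ^ (n + 2 - k))) := by
        rw [map_sum, Finset.mul_sum]
        refine Finset.sum_congr rfl fun k hk => ?_
        rw [H_C_mul]; ring
    _ = _ := by
        rw [Finset.mul_sum]
        refine Finset.sum_congr rfl fun k hk => ?_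
        simp only [Finset.mem_Icc] at hk
        have := HP_of_hH t η σ c H hs hH (n - k)
        rw [show (n - k) + 1 = n + 1 - k by omega, show (n - k) + 2 = n + 2 - k by omega] at this
        rw [this]
        ring

lemma Emon (hs : (1 + σ * t) ≠ 0) (hc1 : c 1 = 1)
    (hc : ∀ k : ℕ, 1 ≤ k →
      (1 + σ * t) * c (k + 1) =
        (θ - η * t) * c k +
          (t + τ) * ((∑ j ∈ Ico 1 k, c j * c (k - j)) +
            η * ∑ j ∈ range k, c (j + 1) * c (k - j) +
            σ * ∑ j ∈ range k, c (j + 2) * c (k - j)))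
    (hH : ∀ n : ℕ, H (X ^ n) =
      C (1 / (1 + σ * t)) * (1 + C η * X + C σ * X ^ 2) *
        ∑ k ∈ Icc 1 n, C (c k) * X ^ (n - k)) (n : ℕ) :
    (1 + σ * t) • H (X ^ (n + 1)) =
      X ^ n + η • X ^ (n + 1) + σ • X ^ (n + 2) + (θ - η * t) • H (X ^ n)
        - (σ * (t + τ)) • (X * H (X ^ n))
        + ((t + τ) * (1 + σ * t)) • H (H (X ^ n)) := by
  have hCs : (C (1 + σ * t) : Polynomial ℝ) ≠ 0 := by
    exact_mod_cast Polynomial.C_ne_zero.mpr hs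
  apply mul_left_cancel₀ (mul_ne_zero hCs hCs)
  simp only [smul_eq_C_mul]
  have h1 := hH'_of_hH t η σ c H hs hH (n + 1)
  have h0 := hH'_of_hH t η σ c H hs hH n
  have hhs := HHsq_of_hH t η σ c H hs hH n
  have hcore := core t η θ σ τ c hc1 hc n
  simp only [C_add, C_sub, C_mul, C_1] at h1 h0 hhs hcore ⊢
  linear_combination ((1 + C σ * C t) * (1 + C σ * C t)) * h1
    - ((1 + C σ * C t) * (C θ - C η * C t) - (1 + C σ * C t) * (C σ * (C t + C τ)) * X) * h0
    - ((C t + C τ) * (1 + C σ * C t)) * hhs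
    + ((1 + C σ * C t) * (1 + C η * X + C σ * X ^ 2)) * hcore

end Emon

lemma coeff_XX_mul_Gpoly (c : ℕ → ℝ) (n j : ℕ) :
    (X * (X * Gpoly c n)).coeff j = if 2 ≤ j ∧ j ≤ n + 1 then c (n + 2 - j) else 0 := by
  rcases j with _ | j
  · simp [Polynomial.mul_coeff_zero]
  · rw [coeff_X_mul, coeff_X_mul_Gpoly]
    split_ifs with h1 h2 h2
    · congr 1; omega
    · omega
    · omega
    · rfl

lemma rec_of_eq (t η θ σ τ : ℝ) (H' : Module.End ℝ (Polynomial ℝ))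
    (heq : (1 + σ * t) • (H' * F) =
        1 + η • F + σ • (F * F) + (θ - η * t) • H' - (σ * (t + τ)) • (F * H')
          + ((t + τ) * (1 + σ * t)) • (H' * H')) (n : ℕ) :
    (1 + σ * t) • H' (X ^ (n + 1)) =
      X ^ n + η • X ^ (n + 1) + σ • X ^ (n + 2) + (θ - η * t) • H' (X ^ n)
        - (σ * (t + τ)) • (X * H' (X ^ n))
        + ((t + τ) * (1 + σ * t)) • H' (H' (X ^ n)) := by
  have h := LinearMap.congr_fun heq (X ^ n)
  simp only [LinearMap.smul_apply, Module.End.mul_apply, LinearMap.add_apply,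
    LinearMap.sub_apply, Module.End.one_apply, F, LinearMap.mulLeft_apply] at h
  rw [show (X : Polynomial ℝ) * X ^ n = X ^ (n + 1) by ring,
    show (X : Polynomial ℝ) * X ^ (n + 1) = X ^ (n + 2) by ring] at h
  exact h

lemma eq_of_rec (t η θ σ τ : ℝ) (H' : Module.End ℝ (Polynomial ℝ))
    (hrec : ∀ n : ℕ, (1 + σ * t) • H' (X ^ (n + 1)) =
      X ^ n + η • X ^ (n + 1) + σ • X ^ (n + 2) + (θ - η * t) • H' (X ^ n)
        - (σ * (t + τ)) • (X * H' (X ^ n))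
        + ((t + τ) * (1 + σ * t)) • H' (H' (X ^ n))) :
    (1 + σ * t) • (H' * F) =
        1 + η • F + σ • (F * F) + (θ - η * t) • H' - (σ * (t + τ)) • (F * H')
          + ((t + τ) * (1 + σ * t)) • (H' * H') := by
  apply LinearMap.ext
  intro p
  induction p using Polynomial.induction_on' with
  | add p q hp hq => rw [LinearMap.map_add, LinearMap.map_add, hp, hq]
  | monomial n a =>
    simp only [LinearMap.smul_apply, Module.End.mul_apply, LinearMap.add_apply,
      LinearMap.sub_apply, Module.End.one_apply, F, LinearMap.mulLeft_apply]
    rw [← C_mul_X_pow_eq_monomial]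
    have hXc : (X : Polynomial ℝ) * (C a * X ^ n) = C a * X ^ (n + 1) := by ring
    have hXXc : (X : Polynomial ℝ) * (C a * X ^ (n + 1)) = C a * X ^ (n + 2) := by ring
    rw [hXc, hXXc, H_C_mul, H_C_mul, H_C_mul]
    have h := hrec n
    calc (1 + σ * t) • (C a * H' (X ^ (n + 1)))
        = C a * ((1 + σ * t) • H' (X ^ (n + 1))) := by
          rw [smul_eq_C_mul, smul_eq_C_mul]; ring
      _ = C a * (X ^ n + η • X ^ (n + 1) + σ • X ^ (n + 2) + (θ - η * t) • H' (X ^ n)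
            - (σ * (t + τ)) • (X * H' (X ^ n))
            + ((t + τ) * (1 + σ * t)) • H' (H' (X ^ n))) := by rw [h]
      _ = _ := by
          simp only [smul_eq_C_mul]
          ring

/-- The operator `H_t` given on monomials by
`H_t(Xⁿ) = (1/(1+σt))·(1+ηX+σX²)·Σ_{k=1}^{n} c_k·X^{n−k}` satisfies
`(1+σt)·(H_t∘F) = id + η·F + σ·F² + (θ−ηt)·H_t − σ(t+τ)·(F∘H_t) + (t+τ)(1+σt)·H_t²`,
and it is the unique operator `H` with `H 1 = 0` satisfying this equation. -/
theorem stmt5 (t η θ σ τ : ℝ) (ht : 0 < t) (hσ : 0 ≤ σ) (hτ : 0 ≤ τ)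
    (hστ : σ * τ ≠ 1) (c : ℕ → ℝ) (hc1 : c 1 = 1)
    (hc : ∀ k : ℕ, 1 ≤ k →
      (1 + σ * t) * c (k + 1) =
        (θ - η * t) * c k +
          (t + τ) * ((∑ j ∈ Ico 1 k, c j * c (k - j)) +
            η * ∑ j ∈ range k, c (j + 1) * c (k - j) +
            σ * ∑ j ∈ range k, c (j + 2) * c (k - j)))
    (H : Module.End ℝ (Polynomial ℝ))
    (hH : ∀ n : ℕ, H (X ^ n) =
      C (1 / (1 + σ * t)) * (1 + C η * X + C σ * X ^ 2) *
        ∑ k ∈ Icc 1 n, C (c k) * X ^ (n - k)) :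
    ((1 + σ * t) • (H * F) =
        1 + η • F + σ • (F * F) + (θ - η * t) • H - (σ * (t + τ)) • (F * H)
          + ((t + τ) * (1 + σ * t)) • (H * H)) ∧
      ∀ H' : Module.End ℝ (Polynomial ℝ), H' 1 = 0 →
        (1 + σ * t) • (H' * F) =
            1 + η • F + σ • (F * F) + (θ - η * t) • H' - (σ * (t + τ)) • (F * H')
              + ((t + τ) * (1 + σ * t)) • (H' * H') →
        H' = H := by
  have hspos : (0:ℝ) < 1 + σ * t := by nlinarith [mul_nonneg hσ ht.le]
  have hs : (1 + σ * t) ≠ 0 := hspos.ne'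
  have part1 := eq_of_rec t η θ σ τ H (fun n => Emon t η θ σ τ c H hs hc1 hc hH n)
  refine ⟨part1, ?_⟩
  intro H' hH'1 heq'
  have E' := rec_of_eq t η θ σ τ H' heq'
  have E := rec_of_eq t η θ σ τ H part1
  have hH0 : H ((X : Polynomial ℝ) ^ 0) = 0 := by rw [hH 0]; simp
  have hdecomp : ∀ n : ℕ, 1 ≤ n → ∃ Q : Polynomial ℝ, Q.natDegree ≤ n ∧
      H (X ^ n) = C (σ * (1 / (1 + σ * t))) * X ^ (n + 1) + Q := by
    intro n hn
    refine ⟨H (X ^ n) - C (σ * (1 / (1 + σ * t))) * X ^ (n + 1), ?_, by ring⟩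
    have hform : H (X ^ n) = C (1 / (1 + σ * t)) *
        (Gpoly c n + C η * (X * Gpoly c n) + C σ * (X * (X * Gpoly c n))) := by
      rw [hH n]
      show C (1 / (1 + σ * t)) * (1 + C η * X + C σ * X ^ 2) * Gpoly c n = _
      ring
    rw [natDegree_le_iff_coeff_eq_zero]
    intro N hN
    rw [coeff_sub, hform]
    simp only [coeff_C_mul, coeff_add, coeff_X_pow, coeff_Gpoly, coeff_X_mul_Gpoly,
      coeff_XX_mul_Gpoly]
    rw [if_neg (by omega : ¬ N + 1 ≤ n), if_neg (by omega : ¬(1 ≤ N ∧ N ≤ n))]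
    rcases eq_or_ne N (n + 1) with rfl | hNe
    · rw [if_pos (by omega : 2 ≤ n + 1 ∧ n + 1 ≤ n + 1), if_pos rfl,
        show n + 2 - (n + 1) = 1 by omega, hc1]
      ring
    · rw [if_neg (by omega : ¬(2 ≤ N ∧ N ≤ n + 1)), if_neg hNe]
      ring
  have key : ∀ n : ℕ, H' (X ^ n) = H (X ^ n) := by
    intro n
    induction n using Nat.strong_induction_on with
    | _ n IH =>
      rcases n with _ | m
      · have h1 : H (1 : Polynomial ℝ) = 0 := by simpa using hH0
        rw [pow_zero, hH'1, h1]
      · have IHp : ∀ p : Polynomial ℝ, p.natDegree ≤ m → H' p = H p := by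
          intro p hp
          have hrepr := p.as_sum_range' (m + 1) (by omega)
          conv_lhs => rw [hrepr]
          conv_rhs => rw [hrepr]
          rw [map_sum, map_sum]
          refine Finset.sum_congr rfl fun i hi => ?_
          simp only [Finset.mem_range] at hi
          rw [← C_mul_X_pow_eq_monomial, H_C_mul, H_C_mul, IH i (by omega)]
        rcases Nat.eq_zero_or_pos m with rfl | hm
        · have E'0 := E' 0
          have E0 := E 0
          have h1 : H (1 : Polynomial ℝ) = 0 := by simpa using hH0
          rw [pow_zero, hH'1] at E'0
          rw [pow_zero, h1] at E0
          simp only [map_zero, mul_zero, smul_zero] at E'0 E0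
          have heq2 : (1 + σ * t) • H' (X ^ (0 + 1)) = (1 + σ * t) • H (X ^ (0 + 1)) := by
            rw [E'0, E0]
          have := smul_right_injective (Polynomial ℝ) hs heq2
          simpa using this
        · obtain ⟨Q, hQdeg, hQ⟩ := hdecomp m hm
          have hIHm : H' (X ^ m) = H (X ^ m) := IH m (by omega)
          have E'm := E' m
          have Em := E m
          rw [hIHm] at E'm
          have hsplit' : H' (H (X ^ m)) = C (σ * (1 / (1 + σ * t))) * H' (X ^ (m + 1)) + H Q := by
            rw [hQ, LinearMap.map_add, H_C_mul, IHp Q hQdeg]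
          have hsplit : H (H (X ^ m)) = C (σ * (1 / (1 + σ * t))) * H (X ^ (m + 1)) + H Q := by
            rw [hQ, LinearMap.map_add, H_C_mul]
          rw [hsplit'] at E'm
          rw [hsplit] at Em
          have hdiff : C (1 - σ * τ) * (H' (X ^ (m + 1)) - H (X ^ (m + 1))) = 0 := by
            have expand : (C (1 - σ * τ) : Polynomial ℝ)
                = C (1 + σ * t) - C ((t + τ) * (1 + σ * t)) * C (σ * (1 / (1 + σ * t))) := by
              rw [← C_mul, ← C_sub]
              congr 1
              field_simp
              ring
            simp only [smul_eq_C_mul] at E'm Em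
            rw [expand]
            linear_combination E'm - Em
          rcases mul_eq_zero.mp hdiff with h | h
          · exfalso
            rw [C_eq_zero] at h
            apply hστ
            linarith
          · rw [sub_eq_zero] at h
            exact h
  apply LinearMap.ext
  intro p
  induction p using Polynomial.induction_on' with
  | add p q hp hq => rw [LinearMap.map_add, LinearMap.map_add, hp, hq]
  | monomial n a => rw [← C_mul_X_pow_eq_monomial, H_C_mul, H_C_mul, key n]
end

section
/- Let φ be the formal power series in ℝ[[z]] whose n-th coefficient equals c_{n+1} for every n ≥ 0 (so φ has constant term c_1 = 1). Then, as an identity of formal power series, (t+τ)·(z² + η·z + σ)·φ² + ((θ − tη)·z − 2tσ − στ − 1)·φ + (tσ + 1) = 0. -/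
open Finset PowerSeries

/-
The recurrence for `c_{k+1}` is exactly the vanishing of the `k`-th coefficient of the quadratic
expression, once the three convolution sums are read as the coefficients of `z²φ²`, `zφ²` and `φ²`
(the last one minus its boundary term `c₁ c_{k+1}`); the constant coefficient vanishes because
`c₁ = 1`.
-/

section CoeffConvolution

variable {R : Type*} [CommSemiring R] {c : ℕ → R} {φ : PowerSeries R}

theorem coeff_sq_eq_sum_range (hφ : ∀ n, coeff n φ = c (n + 1)) (n : ℕ) :
    coeff n (φ ^ 2) = ∑ j ∈ range (n + 1), c (j + 1) * c (n - j + 1) := by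
  rw [pow_two, coeff_mul, Nat.sum_antidiagonal_eq_sum_range_succ_mk]
  simp only [hφ]

theorem coeff_sq_eq_sum_range_add (hφ : ∀ n, coeff n φ = c (n + 1)) (n : ℕ) :
    coeff n (φ ^ 2) = ∑ j ∈ range n, c (j + 2) * c (n - j) + c 1 * c (n + 1) := by
  rw [coeff_sq_eq_sum_range hφ, sum_range_succ']
  refine congrArg₂ _ (sum_congr rfl fun j hj => ?_) (by simp)
  rw [show n - (j + 1) + 1 = n - j by have := mem_range.mp hj; omega]

theorem coeff_X_mul_sq_eq_sum_range (hφ : ∀ n, coeff n φ = c (n + 1)) (n : ℕ) :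
    coeff n (X * φ ^ 2) = ∑ j ∈ range n, c (j + 1) * c (n - j) := by
  rcases n with _ | n
  · simp
  rw [coeff_succ_X_mul, coeff_sq_eq_sum_range hφ]
  refine sum_congr rfl fun j hj => ?_
  rw [show n - j + 1 = n + 1 - j by have := mem_range.mp hj; omega]

theorem coeff_X_sq_mul_sq_eq_sum_Ico (hφ : ∀ n, coeff n φ = c (n + 1)) (n : ℕ) :
    coeff n (X ^ 2 * φ ^ 2) = ∑ j ∈ Ico 1 n, c j * c (n - j) := by
  rcases n with _ | n
  · simp
  rw [pow_two, mul_assoc, coeff_succ_X_mul, coeff_X_mul_sq_eq_sum_range hφ,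
    sum_Ico_eq_sum_range, Nat.add_sub_cancel]
  refine sum_congr rfl fun j _ => ?_
  rw [add_comm 1 j, Nat.add_sub_add_right]

end CoeffConvolution

theorem stmt6_general (t η θ σ τ : ℝ) (c : ℕ → ℝ) (hc1 : c 1 = 1)
    (hc : ∀ k : ℕ, 1 ≤ k →
      (1 + σ * t) * c (k + 1) =
        (θ - η * t) * c k +
          (t + τ) * ((∑ j ∈ Ico 1 k, c j * c (k - j)) +
            η * ∑ j ∈ range k, c (j + 1) * c (k - j) +
            σ * ∑ j ∈ range k, c (j + 2) * c (k - j)))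
    (φ : PowerSeries ℝ)
    (hφ : ∀ n : ℕ, PowerSeries.coeff n φ = c (n + 1)) :
    PowerSeries.C (t + τ) * (PowerSeries.X ^ 2 + PowerSeries.C η * PowerSeries.X
          + PowerSeries.C σ) * φ ^ 2
        + (PowerSeries.C (θ - t * η) * PowerSeries.X
          - PowerSeries.C (2 * t * σ + σ * τ + 1)) * φ
        + PowerSeries.C (t * σ + 1) = 0 := by
  ext n
  simp only [mul_add, add_mul, sub_mul, mul_assoc, map_add, map_sub, coeff_C_mul, coeff_C,
    coeff_X_sq_mul_sq_eq_sum_Ico hφ, coeff_X_mul_sq_eq_sum_range hφ,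
    coeff_sq_eq_sum_range_add hφ, hφ, hc1, map_zero]
  rcases n with _ | k
  · simp only [Ico_eq_empty_of_le, zero_le, range_zero, sum_empty, hc1,
      coeff_zero_eq_constantCoeff, map_mul, constantCoeff_X, if_pos]
    ring
  · simp only [coeff_succ_X_mul, hφ, Nat.add_one_ne_zero, if_false]
    linear_combination -hc (k + 1) k.succ_pos

/-- The generating function `φ(z) = Σ_{k≥1} c_k z^{k-1}` of the sequence `(c_k)` solving
the recurrence satisfies the quadratic equation
`(t+τ)(z²+ηz+σ)φ² + ((θ−tη)z − 2tσ − στ − 1)φ + (tσ+1) = 0` as formal power series. -/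
theorem stmt6 (t η θ σ τ : ℝ) (ht : 0 < t) (hσ : 0 ≤ σ) (hτ : 0 ≤ τ)
    (hστ : σ * τ ≠ 1) (c : ℕ → ℝ) (hc1 : c 1 = 1)
    (hc : ∀ k : ℕ, 1 ≤ k →
      (1 + σ * t) * c (k + 1) =
        (θ - η * t) * c k +
          (t + τ) * ((∑ j ∈ Ico 1 k, c j * c (k - j)) +
            η * ∑ j ∈ range k, c (j + 1) * c (k - j) +
            σ * ∑ j ∈ range k, c (j + 2) * c (k - j)))
    (φ : PowerSeries ℝ)
    (hφ : ∀ n : ℕ, PowerSeries.coeff n φ = c (n + 1)) :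
    PowerSeries.C (t + τ) * (PowerSeries.X ^ 2 + PowerSeries.C η * PowerSeries.X
          + PowerSeries.C σ) * φ ^ 2
        + (PowerSeries.C (θ - t * η) * PowerSeries.X
          - PowerSeries.C (2 * t * σ + σ * τ + 1)) * φ
        + PowerSeries.C (t * σ + 1) = 0 :=
  stmt6_general t η θ σ τ c hc1 hc φ hφ
end

section
/- For every p > 1 there exists a constant M ≥ 1 such that |c_k| ≤ M^{k−2}/k^p for all k ≥ 3. -/
open Finset


lemma baselRange : ∀ N : ℕ, ∑ j ∈ range (N+1), (1:ℝ)/((j:ℝ)+1)^2 ≤ 2 - 1/((N:ℝ)+1) := by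
  intro N
  induction N with
  | zero => norm_num
  | succ N ih =>
    rw [Finset.sum_range_succ]
    push_cast
    have h1 : (0:ℝ) < (N:ℝ)+1 := by positivity
    have h2 : (0:ℝ) < (N:ℝ)+2 := by positivity
    have key : (1:ℝ)/((N:ℝ)+1+1)^2 ≤ 1/((N:ℝ)+1) - 1/((N:ℝ)+2) := by
      rw [div_sub_div _ _ (ne_of_gt h1) (ne_of_gt h2), div_le_div_iff₀ (by positivity) (by positivity)]
      ring_nf
      nlinarith
    have e : (1:ℝ)/((N:ℝ)+1+1) = 1/((N:ℝ)+2) := by ring_nf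
    linarith

lemma baselIco (m : ℕ) : ∑ j ∈ Ico 1 m, (1:ℝ)/(j:ℝ)^2 ≤ 2 := by
  rcases Nat.eq_zero_or_pos m with h | h
  · subst h; simp
  rw [Finset.sum_Ico_eq_sum_range]
  rcases Nat.exists_eq_add_of_le h with ⟨N, rfl⟩
  calc ∑ j ∈ range (1 + N - 1), (1:ℝ)/((1+j:ℕ):ℝ)^2
      = ∑ j ∈ range N, (1:ℝ)/((j:ℝ)+1)^2 := by
        apply Finset.sum_congr (by congr 1; omega)
        intro j hj; push_cast; ring_nf
    _ ≤ 2 := by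
        cases N with
        | zero => simp
        | succ N =>
          have := baselRange N
          have : (0:ℝ) < (N:ℝ)+1 := by positivity
          have h' := baselRange N
          have hpos : (0:ℝ) ≤ 1/((N:ℝ)+1) := by positivity
          linarith

lemma sub1 (a b : ℝ) (ha : 1 ≤ a) (hb : 1 ≤ b) :
    1/(a^2*b^2) ≤ 2/(a+b)^2 * (1/a^2 + 1/b^2) := by
  have ha0 : (0:ℝ) < a := by linarith
  have hb0 : (0:ℝ) < b := by linarith
  rw [div_add_div _ _ (by positivity) (by positivity), div_mul_div_comm,
    div_le_div_iff₀ (by positivity) (by positivity)]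
  nlinarith [sq_nonneg (a-b), sq_nonneg (a*b), mul_pos ha0 hb0, sq_nonneg (a*b*(a-b))]

lemma baselIcoRefl (m : ℕ) (hm : 1 ≤ m) :
    ∑ j ∈ Ico 1 m, (1:ℝ)/((m:ℝ)-(j:ℝ))^2 ≤ 2 := by
  have : ∑ j ∈ Ico 1 m, (1:ℝ)/((m:ℝ)-(j:ℝ))^2 = ∑ j ∈ Ico 1 m, (1:ℝ)/(j:ℝ)^2 := by
    apply Finset.sum_nbij' (fun j => m - j) (fun j => m - j)
    · intro a hha; simp only [Finset.mem_Ico] at *; omega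
    · intro a hha; simp only [Finset.mem_Ico] at *; omega
    · intro a hha; simp only [Finset.mem_Ico] at *; omega
    · intro a hha; simp only [Finset.mem_Ico] at *; omega
    · intro a hha
      simp only [Finset.mem_Ico] at hha
      have : ((m - a : ℕ):ℝ) = (m:ℝ) - (a:ℝ) := by
        have : a ≤ m := by omega
        push_cast [this]; ring
      rw [this]
  rw [this]; exact baselIco m

lemma convsum (m : ℕ) (hm : 1 ≤ m) :
    ∑ j ∈ Ico 1 m, 1/((j:ℝ)^2*((m:ℝ)-(j:ℝ))^2) ≤ 8/(m:ℝ)^2 := by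
  have hm0 : (0:ℝ) < (m:ℝ) := by exact_mod_cast hm
  calc ∑ j ∈ Ico 1 m, 1/((j:ℝ)^2*((m:ℝ)-(j:ℝ))^2)
      ≤ ∑ j ∈ Ico 1 m, (2/(m:ℝ)^2 * (1/(j:ℝ)^2 + 1/((m:ℝ)-(j:ℝ))^2)) := by
        apply Finset.sum_le_sum
        intro j hj
        simp only [Finset.mem_Ico] at hj
        have ha : (1:ℝ) ≤ (j:ℝ) := by exact_mod_cast hj.1
        have hb : (1:ℝ) ≤ (m:ℝ) - (j:ℝ) := by
          have : (j:ℝ) + 1 ≤ (m:ℝ) := by exact_mod_cast hj.2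
          linarith
        have := sub1 (j:ℝ) ((m:ℝ)-(j:ℝ)) ha hb
        have e : (j:ℝ) + ((m:ℝ)-(j:ℝ)) = (m:ℝ) := by ring
        rw [e] at this
        exact this
    _ = 2/(m:ℝ)^2 * ((∑ j ∈ Ico 1 m, 1/(j:ℝ)^2) + ∑ j ∈ Ico 1 m, 1/((m:ℝ)-(j:ℝ))^2) := by
        rw [← Finset.mul_sum, ← Finset.sum_add_distrib]
    _ ≤ 2/(m:ℝ)^2 * (2 + 2) := by
        apply mul_le_mul_of_nonneg_left _ (by positivity)
        exact add_le_add (baselIco m) (baselIcoRefl m hm)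
    _ = 8/(m:ℝ)^2 := by ring

lemma conv2 (c : ℕ → ℝ) (ε Bv : ℝ) (hε : 0 ≤ ε) (hB : 1 ≤ Bv) (q : ℕ)
    (hw : ∀ j, 2 ≤ j → j ≤ q + 1 → |c j| ≤ ε*Bv^j/(j:ℝ)^2) :
    ∑ j ∈ Ico 2 (q + 2), |c j| * |c (q + 3 - j)| ≤ 8*ε^2*Bv^(q+3)/((q:ℝ)+3)^2 := by
  have hB0 : (0:ℝ) < Bv := by linarith
  have hcast3 : ((q+3:ℕ):ℝ) = (q:ℝ)+3 := by push_cast; ring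
  calc ∑ j ∈ Ico 2 (q + 2), |c j| * |c (q + 3 - j)|
      ≤ ∑ j ∈ Ico 2 (q + 2), ε^2*Bv^(q+3) * (1/((j:ℝ)^2*(((q:ℝ)+3)-(j:ℝ))^2)) := by
        apply Finset.sum_le_sum
        intro j hj
        simp only [Finset.mem_Ico] at hj
        have h1 : 2 ≤ j := hj.1
        have h2 : j ≤ q + 1 := by omega
        have h3 : 2 ≤ q + 3 - j := by omega
        have h4 : q + 3 - j ≤ q + 1 := by omega
        have hcj := hw j h1 h2
        have hcj' := hw (q+3-j) h3 h4
        have hcast : ((q+3-j:ℕ):ℝ) = ((q:ℝ)+3)-(j:ℝ) := by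
          have : j ≤ q+3 := by omega
          push_cast [this]; ring
        have hjpos : (0:ℝ) < (j:ℝ) := by exact_mod_cast (by omega : 0 < j)
        have hjq : (0:ℝ) < ((q:ℝ)+3)-(j:ℝ) := by
          have : (j:ℝ) ≤ (q:ℝ)+1 := by exact_mod_cast h2
          linarith
        calc |c j| * |c (q + 3 - j)|
            ≤ (ε*Bv^j/(j:ℝ)^2) * (ε*Bv^(q+3-j)/((q+3-j:ℕ):ℝ)^2) :=
              mul_le_mul hcj hcj' (abs_nonneg _) (by positivity)
          _ = ε^2*Bv^(q+3) * (1/((j:ℝ)^2*(((q:ℝ)+3)-(j:ℝ))^2)) := by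
              rw [hcast]
              have hpow : Bv^j * Bv^(q+3-j) = Bv^(q+3) := by
                rw [← pow_add]; congr 1; omega
              rw [div_mul_div_comm,
                show ε*Bv^j*(ε*Bv^(q+3-j)) = ε^2*(Bv^j*Bv^(q+3-j)) from by ring, hpow]
              ring
    _ ≤ ∑ j ∈ Ico 1 (q+3), ε^2*Bv^(q+3) * (1/((j:ℝ)^2*(((q:ℝ)+3)-(j:ℝ))^2)) := by
        apply Finset.sum_le_sum_of_subset_of_nonneg
        · apply Finset.Ico_subset_Ico <;> omega
        · intro i _ _; positivity
    _ = ε^2*Bv^(q+3) * ∑ j ∈ Ico 1 (q+3), 1/((j:ℝ)^2*(((q:ℝ)+3)-(j:ℝ))^2) := by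
        rw [← Finset.mul_sum]
    _ ≤ ε^2*Bv^(q+3) * (8/((q:ℝ)+3)^2) := by
        apply mul_le_mul_of_nonneg_left _ (by positivity)
        have := convsum (q+3) (by omega)
        rw [hcast3] at this
        exact this
    _ = 8*ε^2*Bv^(q+3)/((q:ℝ)+3)^2 := by ring

lemma natpow4 : ∀ m : ℕ, m + 3 ≤ 4^(m+1) := by
  intro m
  induction m with
  | zero => norm_num
  | succ m ih =>
    have : 4^(m+1+1) = 4*4^(m+1) := by ring
    omega

lemma divle (a C x y : ℝ) (ha : 0 ≤ a) (hx : 0 < x) (hy : 0 < y)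
    (h : y^2 ≤ C*x^2) : a/x^2 ≤ C*a/y^2 := by
  rw [div_le_div_iff₀ (by positivity) (by positivity)]
  nlinarith

lemma sqA (x : ℝ) (hx : 0 ≤ x) : (x+4)^2 ≤ 4*(x+3)^2 := by nlinarith
lemma sqB (x : ℝ) (hx : 0 ≤ x) : (x+4)^2 ≤ 4*(x+2)^2 := by nlinarith
lemma sqC (x : ℝ) (hx : 0 ≤ x) : (x+4)^2 ≤ 1*(x+5)^2 := by nlinarith

set_option maxHeartbeats 1000000 in
/-- Growth bound for the coefficients `c_k`: for every `p > 1` there is a constant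
`M ≥ 1` such that `|c_k| ≤ M^{k-2}/k^p` for all `k ≥ 3`. -/
theorem stmt7 (t η θ σ τ : ℝ) (ht : 0 < t) (hσ : 0 ≤ σ) (hτ : 0 ≤ τ)
    (hστ : σ * τ ≠ 1) (c : ℕ → ℝ) (hc1 : c 1 = 1)
    (hc : ∀ k : ℕ, 1 ≤ k →
      (1 + σ * t) * c (k + 1) =
        (θ - η * t) * c k +
          (t + τ) * ((∑ j ∈ Ico 1 k, c j * c (k - j)) +
            η * ∑ j ∈ range k, c (j + 1) * c (k - j) +
            σ * ∑ j ∈ range k, c (j + 2) * c (k - j))) :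
    ∀ p : ℝ, 1 < p → ∃ M : ℝ, 1 ≤ M ∧
      ∀ k : ℕ, 3 ≤ k → |c k| ≤ M ^ (k - 2) / (k : ℝ) ^ p := by
  have hD : 0 < |1 - σ*τ| := abs_pos.mpr (sub_ne_zero.mpr (Ne.symm hστ))
  set D := |1 - σ*τ| with hDdef
  have hP : 0 < t + τ := by linarith
  set P := t + τ with hPdef
  set E := |θ - η*t| with hEdef
  set H := |η| with hHdef
  have hE : 0 ≤ E := abs_nonneg _
  have hH : 0 ≤ H := abs_nonneg _
  set δ := min 1 (D/(80*P*(σ+1))) with hδdef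
  have hδpos : 0 < δ := lt_min one_pos (by positivity)
  have hδ1 : δ ≤ 1 := min_le_left _ _
  have hδσ : 80*P*δ*(σ+1) ≤ D := by
    have h1 : δ ≤ D/(80*P*(σ+1)) := min_le_right _ _
    have h2 : (0:ℝ) < 80*P*(σ+1) := by positivity
    rw [le_div_iff₀ h2] at h1
    nlinarith
  set B := 1 + 20*E/D + 200*P/D + 80*P*H/D + 4*|c 2|/δ + 9*(|c 3|+1)/δ with hBdef
  have hB1 : 1 ≤ B := by
    have h1 : (0:ℝ) ≤ 20*E/D := by positivity
    have h2 : (0:ℝ) ≤ 200*P/D := by positivity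
    have h3 : (0:ℝ) ≤ 80*P*H/D := by positivity
    have h4 : (0:ℝ) ≤ 4*|c 2|/δ := by positivity
    have h5 : (0:ℝ) ≤ 9*(|c 3|+1)/δ := by positivity
    rw [hBdef]; linarith
  have hB0 : (0:ℝ) < B := by linarith
  have hBE : 20*E ≤ D*B := by
    have h : 20*E/D ≤ B := by
      have h2 : (0:ℝ) ≤ 200*P/D := by positivity
      have h3 : (0:ℝ) ≤ 80*P*H/D := by positivity
      have h4 : (0:ℝ) ≤ 4*|c 2|/δ := by positivity
      have h5 : (0:ℝ) ≤ 9*(|c 3|+1)/δ := by positivity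
      rw [hBdef]; linarith
    rw [div_le_iff₀ hD] at h; linarith
  have hBP : 200*P ≤ D*B := by
    have h : 200*P/D ≤ B := by
      have h2 : (0:ℝ) ≤ 20*E/D := by positivity
      have h3 : (0:ℝ) ≤ 80*P*H/D := by positivity
      have h4 : (0:ℝ) ≤ 4*|c 2|/δ := by positivity
      have h5 : (0:ℝ) ≤ 9*(|c 3|+1)/δ := by positivity
      rw [hBdef]; linarith
    rw [div_le_iff₀ hD] at h; linarith
  have hBH : 80*P*H ≤ D*B := by
    have h : 80*P*H/D ≤ B := by
      have h2 : (0:ℝ) ≤ 20*E/D := by positivity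
      have h3 : (0:ℝ) ≤ 200*P/D := by positivity
      have h4 : (0:ℝ) ≤ 4*|c 2|/δ := by positivity
      have h5 : (0:ℝ) ≤ 9*(|c 3|+1)/δ := by positivity
      rw [hBdef]; linarith
    rw [div_le_iff₀ hD] at h; linarith
  have hBc2 : 4*|c 2| ≤ δ*B := by
    have h : 4*|c 2|/δ ≤ B := by
      have h2 : (0:ℝ) ≤ 20*E/D := by positivity
      have h3 : (0:ℝ) ≤ 200*P/D := by positivity
      have h4 : (0:ℝ) ≤ 80*P*H/D := by positivity
      have h5 : (0:ℝ) ≤ 9*(|c 3|+1)/δ := by positivity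
      rw [hBdef]; linarith
    rw [div_le_iff₀ hδpos] at h; linarith
  have hBc3 : 9*(|c 3|+1) ≤ δ*B := by
    have h : 9*(|c 3|+1)/δ ≤ B := by
      have h2 : (0:ℝ) ≤ 20*E/D := by positivity
      have h3 : (0:ℝ) ≤ 200*P/D := by positivity
      have h4 : (0:ℝ) ≤ 80*P*H/D := by positivity
      have h5 : (0:ℝ) ≤ 4*|c 2|/δ := by positivity
      rw [hBdef]; linarith
    rw [div_le_iff₀ hδpos] at h; linarith
  set ε := δ/B with hεdef
  have hε : 0 < ε := by positivity
  have hεB : ε*B = δ := div_mul_cancel₀ _ (ne_of_gt hB0)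
  have hε1 : ε ≤ 1 := by
    rw [hεdef, div_le_one hB0]; linarith
  clear_value D P E H δ B ε
  clear hBdef hδdef hεdef
  have hcore : 4*E*B + 8*P + 32*P*δ + 8*P*H*B + 8*P*H*δ*B + 8*P*σ*δ*B^2 ≤ D*B^2 := by
    have hBB : B ≤ B^2 := by nlinarith
    have c1 : 4*E*B ≤ (D/5)*B^2 := by nlinarith [mul_le_mul_of_nonneg_right hBE hB0.le]
    have c2 : 8*P + 32*P*δ ≤ (D/5)*B^2 := by
      have h1 : 32*P*δ ≤ 32*P := by nlinarith
      have h2 : D*B ≤ D*B^2 := mul_le_mul_of_nonneg_left hBB hD.le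
      linarith
    have c3 : 8*P*H*B + 8*P*H*δ*B ≤ (D/5)*B^2 := by
      have h1 : 8*P*H*δ*B ≤ 8*P*H*B := by
        nlinarith [mul_nonneg (mul_nonneg (mul_nonneg (by positivity : (0:ℝ) ≤ 8*P) hH) hB0.le) (sub_nonneg.mpr hδ1)]
      have h2 : 80*P*H*B ≤ D*B*B := mul_le_mul_of_nonneg_right hBH hB0.le
      nlinarith
    have c4 : 8*P*σ*δ*B^2 ≤ (D/10)*B^2 := by
      have h1 : 80*P*σ*δ ≤ D := by nlinarith [mul_pos hP hδpos]
      nlinarith [sq_nonneg B]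
    nlinarith
  have main : ∀ k, 2 ≤ k → |c k| ≤ ε*B^k/(k:ℝ)^2 := by
    intro k
    induction k using Nat.strong_induction_on with
    | _ k IH =>
      intro hk
      by_cases hk2 : k = 2
      · subst hk2
        have e : ε*B^2 = δ*B := by rw [← hεB]; ring
        have : ((2:ℕ):ℝ)^2 = 4 := by norm_num
        rw [this, e, le_div_iff₀ (by norm_num : (0:ℝ) < 4)]
        linarith
      · by_cases hk3 : k = 3
        · subst hk3
          have e : ε*B^3 = δ*B*B := by rw [← hεB]; ring
          have h9 : ((3:ℕ):ℝ)^2 = 9 := by norm_num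
          rw [h9, e, le_div_iff₀ (by norm_num : (0:ℝ) < 9)]
          nlinarith [mul_le_mul_of_nonneg_right hBc3 (le_of_lt hB0), abs_nonneg (c 3)]
        · obtain ⟨q, rfl⟩ : ∃ q, k = q + 4 := ⟨k - 4, by omega⟩
          have hw : ∀ j, 2 ≤ j → j ≤ q+3 → |c j| ≤ ε*B^j/(j:ℝ)^2 :=
            fun j h1 h2 => IH j (by omega) h1
          have h := hc (q+3) (by omega)
          rw [show q+3+1 = q+4 from by omega] at h
          have hs3 : ∑ j ∈ range (q+3), c (j+2) * c (q+3-j)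
              = (∑ j ∈ range (q+2), c (j+2) * c (q+3-j)) + c (q+4) := by
            rw [Finset.sum_range_succ, show q+2+2 = q+4 from by omega,
              show q+3-(q+2) = 1 from by omega, hc1, mul_one]
          rw [hs3] at h
          have key : (1 - σ*τ) * c (q+4) =
              (θ - η*t) * c (q+3) + P * ((∑ j ∈ Ico 1 (q+3), c j * c (q+3-j))
                + η * (∑ j ∈ range (q+3), c (j+1) * c (q+3-j))
                + σ * (∑ j ∈ range (q+2), c (j+2) * c (q+3-j))) := by
            linear_combination h + σ * c (q+4) * hPdef
          set S1 := ∑ j ∈ Ico 1 (q+3), c j * c (q+3-j) with hS1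
          set S2 := ∑ j ∈ range (q+3), c (j+1) * c (q+3-j) with hS2
          set S3 := ∑ j ∈ range (q+2), c (j+2) * c (q+3-j) with hS3
          have habs : D * |c (q+4)| ≤ E * |c (q+3)| + P * (|S1| + H * |S2| + σ * |S3|) := by
            have e1 : D * |c (q+4)| = |(1 - σ*τ) * c (q+4)| := by
              rw [abs_mul, ← hDdef]
            rw [e1, key]
            have e2 : |S1 + η*S2 + σ*S3| ≤ |S1| + H*|S2| + σ*|S3| := by
              calc |S1 + η*S2 + σ*S3| ≤ |S1 + η*S2| + |σ*S3| := abs_add_le _ _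
                _ ≤ |S1| + |η*S2| + |σ*S3| := by linarith [abs_add_le S1 (η*S2)]
                _ = |S1| + H*|S2| + σ*|S3| := by
                    rw [abs_mul, abs_mul, ← hHdef, abs_of_nonneg hσ]
            calc |(θ - η*t) * c (q+3) + P * (S1 + η*S2 + σ*S3)|
                ≤ |θ - η*t| * |c (q+3)| + P * |S1 + η*S2 + σ*S3| := by
                  refine le_trans (abs_add_le _ _) ?_
                  rw [abs_mul, abs_mul, abs_of_pos hP]
              _ ≤ E * |c (q+3)| + P * (|S1| + H*|S2| + σ*|S3|) := by
                  rw [hEdef]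
                  exact add_le_add le_rfl (mul_le_mul_of_nonneg_left e2 hP.le)
          -- bounds on individual coefficients
          have hcq2 : |c (q+2)| ≤ ε*B^(q+2)/((q:ℝ)+2)^2 := by
            have h2 := hw (q+2) (by omega) (by omega)
            push_cast at h2; exact h2
          have hcq3 : |c (q+3)| ≤ ε*B^(q+3)/((q:ℝ)+3)^2 := by
            have h2 := hw (q+3) (by omega) (by omega)
            push_cast at h2; exact h2
          -- S1 bound
          have hIco1 : S1 = c 1 * c (q+2) + (∑ j ∈ Ico 2 (q+2), c j * c (q+3-j)) + c (q+2) * c 1 := by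
            rw [hS1, Finset.sum_Ico_succ_top (by omega : 1 ≤ q+2),
              Finset.sum_eq_sum_Ico_succ_bot (by omega : 1 < q+2),
              show q+3-1 = q+2 from by omega, show q+3-(q+2) = 1 from by omega]
          have hconv1 := conv2 c ε B hε.le hB1 q (fun j a b => hw j a (by omega))
          have hS1b : |S1| ≤ 2*(ε*B^(q+2)/((q:ℝ)+2)^2) + 8*ε^2*B^(q+3)/((q:ℝ)+3)^2 := by
            have hint : |∑ j ∈ Ico 2 (q+2), c j * c (q+3-j)| ≤ 8*ε^2*B^(q+3)/((q:ℝ)+3)^2 := by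
              calc |∑ j ∈ Ico 2 (q+2), c j * c (q+3-j)|
                  ≤ ∑ j ∈ Ico 2 (q+2), |c j * c (q+3-j)| := Finset.abs_sum_le_sum_abs _ _
                _ = ∑ j ∈ Ico 2 (q+2), |c j| * |c (q+3-j)| := by simp only [abs_mul]
                _ ≤ 8*ε^2*B^(q+3)/((q:ℝ)+3)^2 := hconv1
            calc |S1| = |c 1 * c (q+2) + (∑ j ∈ Ico 2 (q+2), c j * c (q+3-j)) + c (q+2) * c 1| := by
                  rw [hIco1]
              _ ≤ |c 1 * c (q+2) + ∑ j ∈ Ico 2 (q+2), c j * c (q+3-j)| + |c (q+2) * c 1| := abs_add_le _ _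
              _ ≤ |c 1 * c (q+2)| + |∑ j ∈ Ico 2 (q+2), c j * c (q+3-j)| + |c (q+2) * c 1| := by
                  linarith [abs_add_le (c 1 * c (q+2)) (∑ j ∈ Ico 2 (q+2), c j * c (q+3-j))]
              _ ≤ 2*(ε*B^(q+2)/((q:ℝ)+2)^2) + 8*ε^2*B^(q+3)/((q:ℝ)+3)^2 := by
                  rw [hc1, one_mul, mul_one]
                  linarith [hcq2, hint]
          -- S2 bound
          have hIco2 : S2 = c 1 * c (q+3) + (∑ j ∈ range (q+1), c (j+2) * c (q+2-j)) + c (q+3) * c 1 := by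
            rw [hS2, Finset.sum_range_succ, Finset.sum_range_succ']
            rw [show q+3-(q+2) = 1 from by omega, show q+3-0 = q+3 from by omega,
              show q+2+1 = q+3 from by omega]
            have e : ∑ j ∈ range (q+1), c (j+1+1) * c (q+3-(j+1)) = ∑ j ∈ range (q+1), c (j+2) * c (q+2-j) := by
              apply Finset.sum_congr rfl
              intro j hj
              simp only [Finset.mem_range] at hj
              rw [show j+1+1 = j+2 from by omega, show q+3-(j+1) = q+2-j from by omega]
            rw [e]
            ring
          have hre2 : ∑ j ∈ Ico 2 (q+1+2), |c j| * |c (q+1+3-j)| = ∑ j ∈ range (q+1), |c (j+2)| * |c (q+2-j)| := by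
            rw [Finset.sum_Ico_eq_sum_range]
            apply Finset.sum_congr (by congr 1 <;> omega)
            intro j hj
            simp only [Finset.mem_range] at hj
            rw [show q+1+3-(2+j) = q+2-j from by omega, show 2+j = j+2 from by omega]
          have hconv2 := conv2 c ε B hε.le hB1 (q+1) (fun j a b => hw j a (by omega))
          rw [hre2, show q+1+3 = q+4 from by omega,
            show (((q+1:ℕ)):ℝ)+3 = (q:ℝ)+4 from by push_cast; ring] at hconv2
          have hS2b : |S2| ≤ 2*(ε*B^(q+3)/((q:ℝ)+3)^2) + 8*ε^2*B^(q+4)/((q:ℝ)+4)^2 := by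
            have hint : |∑ j ∈ range (q+1), c (j+2) * c (q+2-j)| ≤ 8*ε^2*B^(q+4)/((q:ℝ)+4)^2 := by
              calc |∑ j ∈ range (q+1), c (j+2) * c (q+2-j)|
                  ≤ ∑ j ∈ range (q+1), |c (j+2) * c (q+2-j)| := Finset.abs_sum_le_sum_abs _ _
                _ = ∑ j ∈ range (q+1), |c (j+2)| * |c (q+2-j)| := by simp only [abs_mul]
                _ ≤ 8*ε^2*B^(q+4)/((q:ℝ)+4)^2 := hconv2
            calc |S2| = |c 1 * c (q+3) + (∑ j ∈ range (q+1), c (j+2) * c (q+2-j)) + c (q+3) * c 1| := by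
                  rw [hIco2]
              _ ≤ |c 1 * c (q+3) + ∑ j ∈ range (q+1), c (j+2) * c (q+2-j)| + |c (q+3) * c 1| := abs_add_le _ _
              _ ≤ |c 1 * c (q+3)| + |∑ j ∈ range (q+1), c (j+2) * c (q+2-j)| + |c (q+3) * c 1| := by
                  linarith [abs_add_le (c 1 * c (q+3)) (∑ j ∈ range (q+1), c (j+2) * c (q+2-j))]
              _ ≤ 2*(ε*B^(q+3)/((q:ℝ)+3)^2) + 8*ε^2*B^(q+4)/((q:ℝ)+4)^2 := by
                  rw [hc1, one_mul, mul_one]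
                  linarith [hcq3, hint]
          -- S3 bound
          have hre3 : ∑ j ∈ Ico 2 (q+2+2), |c j| * |c (q+2+3-j)| = ∑ j ∈ range (q+2), |c (j+2)| * |c (q+3-j)| := by
            rw [Finset.sum_Ico_eq_sum_range]
            apply Finset.sum_congr (by congr 1 <;> omega)
            intro j hj
            simp only [Finset.mem_range] at hj
            rw [show q+2+3-(2+j) = q+3-j from by omega, show 2+j = j+2 from by omega]
          have hconv3 := conv2 c ε B hε.le hB1 (q+2) (fun j a b => hw j a (by omega))
          rw [hre3, show q+2+3 = q+5 from by omega,
            show (((q+2:ℕ)):ℝ)+3 = (q:ℝ)+5 from by push_cast; ring] at hconv3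
          have hS3b : |S3| ≤ 8*ε^2*B^(q+5)/((q:ℝ)+5)^2 := by
            calc |S3| ≤ ∑ j ∈ range (q+2), |c (j+2) * c (q+3-j)| := by
                  rw [hS3]; exact Finset.abs_sum_le_sum_abs _ _
              _ = ∑ j ∈ range (q+2), |c (j+2)| * |c (q+3-j)| := by simp only [abs_mul]
              _ ≤ 8*ε^2*B^(q+5)/((q:ℝ)+5)^2 := hconv3
          -- move everything to denominator ((q:ℝ)+4)^2
          have hq0 : (0:ℝ) ≤ (q:ℝ) := Nat.cast_nonneg q
          have hBp : ∀ m : ℕ, (0:ℝ) ≤ B^m := fun m => pow_nonneg hB0.le m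
          have bC : E * |c (q+3)| ≤ (4*(E*(ε*B^(q+3))))/((q:ℝ)+4)^2 := by
            calc E * |c (q+3)| ≤ E * (ε*B^(q+3)/((q:ℝ)+3)^2) := mul_le_mul_of_nonneg_left hcq3 hE
              _ = (E*(ε*B^(q+3)))/((q:ℝ)+3)^2 := by ring
              _ ≤ 4*(E*(ε*B^(q+3)))/((q:ℝ)+4)^2 :=
                  divle _ 4 _ _ (mul_nonneg hE (mul_nonneg hε.le (hBp _))) (by positivity) (by positivity) (sqA _ hq0)
          have u1 : ε*B^(q+2)/((q:ℝ)+2)^2 ≤ 4*(ε*B^(q+2))/((q:ℝ)+4)^2 :=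
            divle _ 4 _ _ (mul_nonneg hε.le (hBp _)) (by positivity) (by positivity) (sqB _ hq0)
          have u2 : 8*ε^2*B^(q+3)/((q:ℝ)+3)^2 ≤ 4*(8*ε^2*B^(q+3))/((q:ℝ)+4)^2 :=
            divle _ 4 _ _ (mul_nonneg (by positivity) (hBp _)) (by positivity) (by positivity) (sqA _ hq0)
          have u3 : ε*B^(q+3)/((q:ℝ)+3)^2 ≤ 4*(ε*B^(q+3))/((q:ℝ)+4)^2 :=
            divle _ 4 _ _ (mul_nonneg hε.le (hBp _)) (by positivity) (by positivity) (sqA _ hq0)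
          have u4 : 8*ε^2*B^(q+5)/((q:ℝ)+5)^2 ≤ 1*(8*ε^2*B^(q+5))/((q:ℝ)+4)^2 :=
            divle _ 1 _ _ (mul_nonneg (by positivity) (hBp _)) (by positivity) (by positivity) (sqC _ hq0)
          have bS1 : |S1| ≤ (8*(ε*B^(q+2)) + 32*(ε^2*B^(q+3)))/((q:ℝ)+4)^2 := by
            have e : 2*(4*(ε*B^(q+2))/((q:ℝ)+4)^2) + 4*(8*ε^2*B^(q+3))/((q:ℝ)+4)^2
                = (8*(ε*B^(q+2)) + 32*(ε^2*B^(q+3)))/((q:ℝ)+4)^2 := by ring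
            linarith [hS1b, u1, u2]
          have bS2 : |S2| ≤ (8*(ε*B^(q+3)) + 8*(ε^2*B^(q+4)))/((q:ℝ)+4)^2 := by
            have e : 2*(4*(ε*B^(q+3))/((q:ℝ)+4)^2) + 8*ε^2*B^(q+4)/((q:ℝ)+4)^2
                = (8*(ε*B^(q+3)) + 8*(ε^2*B^(q+4)))/((q:ℝ)+4)^2 := by ring
            linarith [hS2b, u3]
          have bS3 : |S3| ≤ (8*(ε^2*B^(q+5)))/((q:ℝ)+4)^2 := by
            have e : 1*(8*ε^2*B^(q+5))/((q:ℝ)+4)^2 = (8*(ε^2*B^(q+5)))/((q:ℝ)+4)^2 := by ring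
            linarith [hS3b, u4]
          have hDabs : D * |c (q+4)| ≤ (4*(E*(ε*B^(q+3))) + P*((8*(ε*B^(q+2)) + 32*(ε^2*B^(q+3)))
              + H*(8*(ε*B^(q+3)) + 8*(ε^2*B^(q+4))) + σ*(8*(ε^2*B^(q+5)))))/((q:ℝ)+4)^2 := by
            have m2 : H*|S2| ≤ (H*(8*(ε*B^(q+3)) + 8*(ε^2*B^(q+4))))/((q:ℝ)+4)^2 := by
              have := mul_le_mul_of_nonneg_left bS2 hH
              have e : H*((8*(ε*B^(q+3)) + 8*(ε^2*B^(q+4)))/((q:ℝ)+4)^2)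
                  = (H*(8*(ε*B^(q+3)) + 8*(ε^2*B^(q+4))))/((q:ℝ)+4)^2 := by ring
              linarith
            have m3 : σ*|S3| ≤ (σ*(8*(ε^2*B^(q+5))))/((q:ℝ)+4)^2 := by
              have := mul_le_mul_of_nonneg_left bS3 hσ
              have e : σ*((8*(ε^2*B^(q+5)))/((q:ℝ)+4)^2) = (σ*(8*(ε^2*B^(q+5))))/((q:ℝ)+4)^2 := by ring
              linarith
            have mP : |S1| + H*|S2| + σ*|S3| ≤ ((8*(ε*B^(q+2)) + 32*(ε^2*B^(q+3)))
                + H*(8*(ε*B^(q+3)) + 8*(ε^2*B^(q+4))) + σ*(8*(ε^2*B^(q+5))))/((q:ℝ)+4)^2 := by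
              have e : ((8*(ε*B^(q+2)) + 32*(ε^2*B^(q+3))))/((q:ℝ)+4)^2
                  + (H*(8*(ε*B^(q+3)) + 8*(ε^2*B^(q+4))))/((q:ℝ)+4)^2
                  + (σ*(8*(ε^2*B^(q+5))))/((q:ℝ)+4)^2
                  = ((8*(ε*B^(q+2)) + 32*(ε^2*B^(q+3)))
                    + H*(8*(ε*B^(q+3)) + 8*(ε^2*B^(q+4))) + σ*(8*(ε^2*B^(q+5))))/((q:ℝ)+4)^2 := by ring
              linarith [bS1, m2, m3]
            have mP2 := mul_le_mul_of_nonneg_left mP hP.le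
            have e2 : P*(((8*(ε*B^(q+2)) + 32*(ε^2*B^(q+3)))
                + H*(8*(ε*B^(q+3)) + 8*(ε^2*B^(q+4))) + σ*(8*(ε^2*B^(q+5))))/((q:ℝ)+4)^2)
                = (P*((8*(ε*B^(q+2)) + 32*(ε^2*B^(q+3)))
                + H*(8*(ε*B^(q+3)) + 8*(ε^2*B^(q+4))) + σ*(8*(ε^2*B^(q+5)))))/((q:ℝ)+4)^2 := by ring
            have e3 : (4*(E*(ε*B^(q+3))))/((q:ℝ)+4)^2 + (P*((8*(ε*B^(q+2)) + 32*(ε^2*B^(q+3)))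
                + H*(8*(ε*B^(q+3)) + 8*(ε^2*B^(q+4))) + σ*(8*(ε^2*B^(q+5)))))/((q:ℝ)+4)^2
                = (4*(E*(ε*B^(q+3))) + P*((8*(ε*B^(q+2)) + 32*(ε^2*B^(q+3)))
                + H*(8*(ε*B^(q+3)) + 8*(ε^2*B^(q+4))) + σ*(8*(ε^2*B^(q+5)))))/((q:ℝ)+4)^2 := by ring
            linarith [habs, bC, mP2]
          have hnum : 4*(E*(ε*B^(q+3))) + P*((8*(ε*B^(q+2)) + 32*(ε^2*B^(q+3)))
              + H*(8*(ε*B^(q+3)) + 8*(ε^2*B^(q+4))) + σ*(8*(ε^2*B^(q+5)))) ≤ D*(ε*B^(q+4)) := by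
            have expand : 4*(E*(ε*B^(q+3))) + P*((8*(ε*B^(q+2)) + 32*(ε^2*B^(q+3)))
                + H*(8*(ε*B^(q+3)) + 8*(ε^2*B^(q+4))) + σ*(8*(ε^2*B^(q+5))))
                = ε*B^(q+2) * (4*E*B + 8*P + 32*P*(ε*B) + 8*P*H*B + 8*P*H*(ε*B)*B + 8*P*σ*(ε*B)*B^2) := by
              ring
            rw [expand, hεB, show D*(ε*B^(q+4)) = ε*B^(q+2) * (D*B^2) from by ring]
            exact mul_le_mul_of_nonneg_left hcore (mul_nonneg hε.le (hBp _))
          have hfinal : |c (q+4)| ≤ ε*B^(q+4)/((q:ℝ)+4)^2 := by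
            have hd4 : (0:ℝ) < ((q:ℝ)+4)^2 := by positivity
            have step : D * |c (q+4)| ≤ D * (ε*B^(q+4)/((q:ℝ)+4)^2) := by
              refine le_trans hDabs ?_
              rw [show D * (ε*B^(q+4)/((q:ℝ)+4)^2) = (D*(ε*B^(q+4)))/((q:ℝ)+4)^2 from by ring]
              exact (div_le_div_iff_of_pos_right hd4).mpr hnum
            exact le_of_mul_le_mul_left step hD
          have ecast : ((q+4:ℕ):ℝ) = (q:ℝ)+4 := by push_cast; ring
          rw [ecast]
          exact hfinal
  -- final extraction
  intro p hp
  have hp0 : 0 ≤ p := by linarith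
  refine ⟨B^3 * (4:ℝ)^p, ?_, ?_⟩
  · have h4p : (1:ℝ) ≤ (4:ℝ)^p := by
      calc (1:ℝ) = (4:ℝ)^(0:ℝ) := (Real.rpow_zero 4).symm
        _ ≤ (4:ℝ)^p := Real.rpow_le_rpow_of_exponent_le (by norm_num) hp0
    have hB3 : (1:ℝ) ≤ B^3 := by nlinarith
    nlinarith [mul_le_mul hB3 h4p zero_le_one (by positivity : (0:ℝ) ≤ B^3)]
  · intro k hk
    have hck : |c k| ≤ B^k := by
      have h := main k (by omega)
      have hk1 : (1:ℝ) ≤ (k:ℝ) := by exact_mod_cast (by omega : 1 ≤ k)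
      have hk2 : (1:ℝ) ≤ (k:ℝ)^2 := by nlinarith
      calc |c k| ≤ ε*B^k/(k:ℝ)^2 := h
        _ ≤ B^k := by
          rw [div_le_iff₀ (by positivity)]
          have hBk : (0:ℝ) ≤ B^k := by positivity
          nlinarith [mul_le_mul_of_nonneg_right hε1 hBk]
    have hkp : (0:ℝ) < (k:ℝ)^p := Real.rpow_pos_of_pos (by exact_mod_cast (by omega : 0 < k)) p
    rw [le_div_iff₀ hkp]
    have hk4 : (k:ℕ) ≤ 4^(k-2) := by
      have := natpow4 (k-3)
      have e : k-3+1 = k-2 := by omega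
      rw [e] at this; omega
    have hkp4 : (k:ℝ)^p ≤ ((4:ℝ)^p)^(k-2) := by
      have h1 : (k:ℝ) ≤ ((4:ℕ)^(k-2) : ℕ) := by exact_mod_cast hk4
      have h2 : (k:ℝ)^p ≤ (((4:ℕ)^(k-2) : ℕ):ℝ)^p :=
        Real.rpow_le_rpow (by positivity) h1 hp0
      calc (k:ℝ)^p ≤ (((4:ℕ)^(k-2) : ℕ):ℝ)^p := h2
        _ = ((4:ℝ)^((k-2:ℕ)):ℝ)^p := by push_cast; ring_nf
        _ = ((4:ℝ)^p)^(k-2) := by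
          rw [← Real.rpow_natCast (4:ℝ) (k-2), ← Real.rpow_natCast ((4:ℝ)^p) (k-2),
            ← Real.rpow_mul (by norm_num), ← Real.rpow_mul (by norm_num), mul_comm]
    have hBk : B^k ≤ (B^3)^(k-2) := by
      rw [← pow_mul]
      exact pow_le_pow_right₀ hB1 (by omega)
    calc |c k| * (k:ℝ)^p ≤ B^k * ((4:ℝ)^p)^(k-2) :=
          mul_le_mul hck hkp4 (by positivity) (by positivity)
      _ ≤ (B^3)^(k-2) * ((4:ℝ)^p)^(k-2) := by
          apply mul_le_mul_of_nonneg_right hBk (by positivity)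
      _ = (B^3 * (4:ℝ)^p)^(k-2) := (mul_pow _ _ _).symm
end

section
/- For every ℝ-linear operator H on ℝ[X] there exists exactly one ℝ-linear operator A on ℝ[X] such that A(1) = 0 and A∘F − F∘A = H. -/
open Polynomial

/-!
An operator commuting with multiplication by `X` is multiplication by its value at `1`, so the
commutator `A ↦ A ∘ X - X ∘ A` is injective on operators killing `1`. Conversely, evaluating
`A ∘ X - X ∘ A = H` at `X ^ n` gives `A (X ^ (n + 1)) = X * A (X ^ n) + H (X ^ n)`, a recursion
that defines `A` on the monomial basis.
-/

namespace Polynomial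

theorem linearMap_ext_X_pow {R M : Type*} [Semiring R] [AddCommMonoid M] [Module R M]
    {f g : R[X] →ₗ[R] M} (h : ∀ n : ℕ, f (X ^ n) = g (X ^ n)) : f = g :=
  (basisMonomials R).ext fun n => by simpa [monomial_one_right_eq_X_pow] using h n

variable {R : Type*} [CommRing R]

noncomputable abbrev mulX : Module.End R R[X] := LinearMap.mulLeft R (X : R[X])

theorem commutator_mulX_apply_X_pow (A : Module.End R R[X]) (n : ℕ) :
    (A * mulX - mulX * A : Module.End R R[X]) (X ^ n) = A (X ^ (n + 1)) - X * A (X ^ n) := by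
  simp [pow_succ']

theorem eq_zero_of_commute_mulX {D : Module.End R R[X]} (hD : Commute D mulX) (h1 : D 1 = 0) :
    D = 0 := by
  refine linearMap_ext_X_pow fun n => ?_
  induction n with
  | zero => simpa using h1
  | succ n ih =>
    have hXn := congrArg (· (X ^ n)) hD
    simp only [Module.End.mul_apply, LinearMap.mulLeft_apply, ih] at hXn
    simpa [pow_succ'] using hXn

noncomputable def mulXCommutatorSolutionAux (H : Module.End R R[X]) : ℕ → R[X]
  | 0 => 0
  | n + 1 => X * mulXCommutatorSolutionAux H n + H (X ^ n)

noncomputable def mulXCommutatorSolution (H : Module.End R R[X]) : Module.End R R[X] :=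
  (basisMonomials R).constr R (mulXCommutatorSolutionAux H)

theorem mulXCommutatorSolution_apply_X_pow (H : Module.End R R[X]) (n : ℕ) :
    mulXCommutatorSolution H (X ^ n) = mulXCommutatorSolutionAux H n := by
  simpa [mulXCommutatorSolution, monomial_one_right_eq_X_pow] using
    (basisMonomials R).constr_basis R (mulXCommutatorSolutionAux H) n

theorem mulXCommutatorSolution_apply_one (H : Module.End R R[X]) :
    mulXCommutatorSolution H 1 = 0 := by
  simpa [mulXCommutatorSolutionAux] using mulXCommutatorSolution_apply_X_pow H 0

theorem commutator_mulXCommutatorSolution (H : Module.End R R[X]) :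
    mulXCommutatorSolution H * mulX - mulX * mulXCommutatorSolution H = H :=
  linearMap_ext_X_pow fun n => by
    rw [commutator_mulX_apply_X_pow, mulXCommutatorSolution_apply_X_pow,
      mulXCommutatorSolution_apply_X_pow, mulXCommutatorSolutionAux, add_sub_cancel_left]

theorem eq_of_commutator_mulX_eq {A B : Module.End R R[X]} (hA1 : A 1 = 0) (hB1 : B 1 = 0)
    (h : A * mulX - mulX * A = B * mulX - mulX * B) : A = B := by
  refine sub_eq_zero.mp (eq_zero_of_commute_mulX ?_ (by simp [hA1, hB1]))
  rw [Commute, SemiconjBy, ← sub_eq_zero]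
  calc (A - B) * mulX - mulX * (A - B)
      = (A * mulX - mulX * A) - (B * mulX - mulX * B) := by
        rw [sub_mul, mul_sub]; abel
    _ = 0 := sub_eq_zero.mpr h

end Polynomial

/-- For every linear operator `H` on `ℝ[X]` there is exactly one linear operator `A`
with `A 1 = 0` and `A∘F − F∘A = H`. -/
theorem stmt8 (H : Module.End ℝ (Polynomial ℝ)) :
    ∃! A : Module.End ℝ (Polynomial ℝ), A 1 = 0 ∧ A * F - F * A = H :=
  ⟨mulXCommutatorSolution H,
    ⟨mulXCommutatorSolution_apply_one H, commutator_mulXCommutatorSolution H⟩,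
    fun _ ⟨hA1, hA⟩ => eq_of_commutator_mulX_eq hA1 (mulXCommutatorSolution_apply_one H)
      (hA.trans (commutator_mulXCommutatorSolution H).symm)⟩
end

section
/- Let A_t be the unique ℝ-linear operator on ℝ[X] with A_t(1) = 0 and A_t∘F − F∘A_t = H_t. Then for every n ≥ 0, A_t(Xⁿ) = (1/(1+σt))·(1+ηX+σX²)·Σ_{k=1}^{n−1} (n−k)·c_k·X^{n−k−1}; equivalently, A_t(Xⁿ) equals (1/(1+σt))·(1+ηX+σX²) times the derivative of the polynomial Σ_{k=1}^{n} c_k·X^{n−k}. -/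
/-!
Since `A X^{n+1} = X · A Xⁿ + H Xⁿ`, the values of `A` on monomials are determined by
induction from `A 1 = 0`. Writing `H Xⁿ = P · Sₙ` with `Sₙ = Σ_{k=1}^n c_k X^{n-k}`, the
Horner recursion `S_{n+1} = X Sₙ + c_{n+1}` gives `S_{n+1}' = Sₙ + X Sₙ'`, which is exactly
the recursion satisfied by `A Xⁿ / P`.
-/

open Polynomial Finset

namespace Polynomial

variable {R : Type*} [CommSemiring R]

noncomputable def revPartialSum (c : ℕ → R) (n : ℕ) : R[X] :=
  ∑ k ∈ Icc 1 n, C (c k) * X ^ (n - k)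

theorem revPartialSum_succ (c : ℕ → R) (n : ℕ) :
    revPartialSum c (n + 1) = X * revPartialSum c n + C (c (n + 1)) := by
  rw [revPartialSum, sum_Icc_succ_top (by omega), Nat.sub_self, pow_zero, mul_one,
    revPartialSum, mul_sum]
  congr 1
  refine sum_congr rfl fun k hk => ?_
  rw [Nat.sub_add_comm (mem_Icc.mp hk).2, pow_succ]
  ring

theorem derivative_revPartialSum_succ (c : ℕ → R) (n : ℕ) :
    derivative (revPartialSum c (n + 1)) =
      revPartialSum c n + X * derivative (revPartialSum c n) := by
  rw [revPartialSum_succ, derivative_add, derivative_mul, derivative_X, derivative_C,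
    one_mul, add_zero]

theorem derivative_revPartialSum (c : ℕ → R) (n : ℕ) :
    derivative (revPartialSum c n) =
      ∑ k ∈ Icc 1 (n - 1), C (((n - k : ℕ) : R) * c k) * X ^ (n - k - 1) := by
  rcases n with _ | m
  · simp [revPartialSum]
  · rw [revPartialSum, derivative_sum, sum_Icc_succ_top (by omega), Nat.sub_self,
      derivative_C_mul_X_pow, Nat.cast_zero, mul_zero, C_0, zero_mul, add_zero,
      Nat.add_sub_cancel]
    refine sum_congr rfl fun k hk => ?_
    rw [derivative_C_mul_X_pow, mul_comm (c k)]

end Polynomial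

theorem apply_X_pow_succ_of_commutator {A H : Module.End ℝ ℝ[X]} (hA : A * F - F * A = H)
    (n : ℕ) : A (X ^ (n + 1)) = X * A (X ^ n) + H (X ^ n) := by
  have h := LinearMap.congr_fun hA (X ^ n)
  simp only [LinearMap.sub_apply, Module.End.mul_apply, F, LinearMap.mulLeft_apply,
    ← pow_succ'] at h
  rw [← h]
  ring

theorem apply_X_pow_eq_mul_derivative_of_commutator {A H : Module.End ℝ ℝ[X]} {P : ℝ[X]}
    {q : ℕ → ℝ[X]} (hA1 : A 1 = 0) (hA : A * F - F * A = H) (hH : ∀ n, H (X ^ n) = P * q n)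
    (hq0 : derivative (q 0) = 0)
    (hq : ∀ n, derivative (q (n + 1)) = q n + X * derivative (q n)) (n : ℕ) :
    A (X ^ n) = P * derivative (q n) := by
  induction n with
  | zero => rw [pow_zero, hA1, hq0, mul_zero]
  | succ n ih =>
    rw [apply_X_pow_succ_of_commutator hA, ih, hH, hq]
    ring

theorem stmt9_general (t η σ : ℝ) (c : ℕ → ℝ)
    (H : Module.End ℝ (Polynomial ℝ))
    (hH : ∀ n : ℕ, H (X ^ n) =
      C (1 / (1 + σ * t)) * (1 + C η * X + C σ * X ^ 2) *
        ∑ k ∈ Icc 1 n, C (c k) * X ^ (n - k))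
    (A : Module.End ℝ (Polynomial ℝ))
    (hA1 : A 1 = 0) (hA : A * F - F * A = H) :
    ∀ n : ℕ, A (X ^ n) =
      C (1 / (1 + σ * t)) * (1 + C η * X + C σ * X ^ 2) *
        ∑ k ∈ Icc 1 (n - 1), C (((n - k : ℕ) : ℝ) * c k) * X ^ (n - k - 1) := by
  intro n
  rw [← derivative_revPartialSum]
  exact apply_X_pow_eq_mul_derivative_of_commutator hA1 hA hH
    (by simp) (derivative_revPartialSum_succ c) n

/-- The unique operator `A_t` with `A_t 1 = 0` and `A_t∘F − F∘A_t = H_t` is given on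
monomials by `A_t(Xⁿ) = (1/(1+σt))·(1+ηX+σX²)·Σ_{k=1}^{n−1} (n−k)·c_k·X^{n−k−1}`. -/
theorem stmt9 (t η θ σ τ : ℝ) (ht : 0 < t) (hσ : 0 ≤ σ) (hτ : 0 ≤ τ)
    (hστ : σ * τ ≠ 1) (c : ℕ → ℝ) (hc1 : c 1 = 1)
    (hc : ∀ k : ℕ, 1 ≤ k →
      (1 + σ * t) * c (k + 1) =
        (θ - η * t) * c k +
          (t + τ) * ((∑ j ∈ Ico 1 k, c j * c (k - j)) +
            η * ∑ j ∈ range k, c (j + 1) * c (k - j) +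
            σ * ∑ j ∈ range k, c (j + 2) * c (k - j)))
    (H : Module.End ℝ (Polynomial ℝ))
    (hH : ∀ n : ℕ, H (X ^ n) =
      C (1 / (1 + σ * t)) * (1 + C η * X + C σ * X ^ 2) *
        ∑ k ∈ Icc 1 n, C (c k) * X ^ (n - k))
    (A : Module.End ℝ (Polynomial ℝ))
    (hA1 : A 1 = 0) (hA : A * F - F * A = H) :
    ∀ n : ℕ, A (X ^ n) =
      C (1 / (1 + σ * t)) * (1 + C η * X + C σ * X ^ 2) *
        ∑ k ∈ Icc 1 (n - 1), C (((n - k : ℕ) : ℝ) * c k) * X ^ (n - k - 1) :=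
  stmt9_general t η σ c H hH A hA1 hA
end

section
/- Let ν be a compactly supported Borel probability measure on ℝ such that ∫ y^{k−1} dν(y) = c_k for every k ≥ 1. Then for every polynomial p ∈ ℝ[X] and every x ∈ ℝ, H_t(p)(x) = ((1+ηx+σx²)/(1+σt))·∫ q_p(x,y) dν(y), where q_p is the two-variable polynomial (divided difference) determined by the identity p(y) − p(x) = (y−x)·q_p(x,y). -/
/-!
For fixed `x`, the divided difference `y ↦ q_p(x, y)` is the polynomial `D_x p` (`divDiff x p`) with
`(Y - x) · D_x p = p - p(x)`, and `p ↦ D_x p` is linear with `D_x Yⁿ = ∑_{j<n} Y^j x^{n-1-j}`.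
Both sides of the identity are therefore linear in `p`, and on `Xⁿ` they agree because the
moments of `ν` are `∫ y^j dν = c_{j+1}`; compact support makes every polynomial integrable.
-/

open Polynomial Finset MeasureTheory

namespace Polynomial

variable {R : Type*} [CommRing R]

/-- `divDiff x p = (p - C (p.eval x)) / (X - C x)`, defined on monomials so that it is
visibly linear. -/
noncomputable def divDiff (x : R) : R[X] →ₗ[R] R[X] :=
  lsum fun n => LinearMap.smulRight LinearMap.id (∑ j ∈ range n, X ^ j * C x ^ (n - 1 - j))

theorem divDiff_monomial (x : R) (n : ℕ) (a : R) :
    divDiff x (monomial n a) = a • ∑ j ∈ range n, X ^ j * C x ^ (n - 1 - j) := by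
  simp [divDiff]

theorem divDiff_X_pow (x : R) (n : ℕ) :
    divDiff x (X ^ n) = ∑ j ∈ range n, X ^ j * C x ^ (n - 1 - j) := by
  rw [← monomial_one_right_eq_X_pow, divDiff_monomial, one_smul]

theorem X_sub_C_mul_divDiff (x : R) (p : R[X]) :
    (X - C x) * divDiff x p = p - C (p.eval x) := by
  induction p using Polynomial.induction_on' with
  | add p q hp hq => rw [map_add, mul_add, hp, hq, eval_add, C_add]; ring
  | monomial n a =>
    rw [divDiff_monomial, mul_smul_comm, mul_comm, geom_sum₂_mul, ← C_mul_X_pow_eq_monomial,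
      smul_eq_C_mul]
    simp only [eval_mul, eval_C, eval_pow, eval_X, C_mul, C_pow]
    ring

theorem eq_divDiff_of_X_sub_C_mul [IsDomain R] {x : R} {p Q : R[X]}
    (h : (X - C x) * Q = p - C (p.eval x)) : Q = divDiff x p :=
  mul_left_cancel₀ (X_sub_C_ne_zero x) (h.trans (X_sub_C_mul_divDiff x p).symm)

theorem eval_divDiff_eq_of_sub_eq_mul [IsDomain R] [Infinite R] {p : R[X]}
    {q : MvPolynomial (Fin 2) R} {x : R}
    (hq : ∀ y, p.eval y - p.eval x = (y - x) * MvPolynomial.eval ![x, y] q) (y : R) :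
    (divDiff x p).eval y = MvPolynomial.eval ![x, y] q := by
  have hQ : ∀ y, (MvPolynomial.aeval ![C x, X] q).eval y = MvPolynomial.eval ![x, y] q := by
    intro y
    rw [MvPolynomial.aeval_def, MvPolynomial.polynomial_eval_eval₂]
    congr
    · ext; simp
    · ext i; fin_cases i <;> simp
  have hmul : (X - C x) * MvPolynomial.aeval ![C x, X] q = p - C (p.eval x) :=
    Polynomial.funext fun y => by simp [hQ, hq]
  rw [← hQ, eq_divDiff_of_X_sub_C_mul hmul]

end Polynomial

theorem Continuous.integrable_of_measure_compl_eq_zero {X E : Type*} [MeasurableSpace X]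
    [TopologicalSpace X] [OpensMeasurableSpace X] [T2Space X] [NormedAddCommGroup E]
    {ν : Measure X} [IsFiniteMeasure ν] {K : Set X} (hK : IsCompact K) (hν : ν Kᶜ = 0)
    {f : X → E} (hf : Continuous f) : Integrable f ν := by
  have h := hf.continuousOn.integrableOn_compact (μ := ν) hK
  rwa [IntegrableOn, Measure.restrict_eq_self_of_ae_mem (ae_iff.mpr hν)] at h

theorem Finset.sum_Icc_one_eq_sum_range {M : Type*} [AddCommMonoid M] (f : ℕ → M) (n : ℕ) :
    ∑ k ∈ Icc 1 n, f k = ∑ j ∈ range n, f (j + 1) := by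
  rw [range_eq_Ico, sum_Ico_add', zero_add, Ico_add_one_right_eq_Icc]

namespace Polynomial

variable {ν : Measure ℝ}

theorem integral_eval_divDiff_X_pow (hint : ∀ p : ℝ[X], Integrable (fun y => p.eval y) ν)
    (x : ℝ) (n : ℕ) :
    ∫ y, (divDiff x (X ^ n)).eval y ∂ν = ∑ j ∈ range n, (∫ y, y ^ j ∂ν) * x ^ (n - 1 - j) := by
  have hpow : ∀ j, Integrable (fun y => y ^ j) ν := fun j => by simpa using hint (X ^ j)
  simp only [divDiff_X_pow, eval_finsetSum, eval_mul, eval_pow, eval_X, eval_C]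
  rw [integral_finsetSum _ fun j _ => (hpow j).mul_const _]
  simp_rw [integral_mul_const]

theorem eval_eq_mul_integral_eval_divDiff (hint : ∀ p : ℝ[X], Integrable (fun y => p.eval y) ν)
    {H : ℝ[X] →ₗ[ℝ] ℝ[X]} {w : ℝ[X]}
    (hH : ∀ n, H (X ^ n) = w * ∑ j ∈ range n, C (∫ y, y ^ j ∂ν) * X ^ (n - 1 - j))
    (x : ℝ) (p : ℝ[X]) :
    (H p).eval x = w.eval x * ∫ y, (divDiff x p).eval y ∂ν := by
  induction p using Polynomial.induction_on' with
  | add p q hp hq =>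
    simp only [map_add, eval_add, integral_add (hint _) (hint _), hp, hq, mul_add]
  | monomial n a =>
    rw [← C_mul_X_pow_eq_monomial, ← smul_eq_C_mul]
    simp only [map_smul, eval_smul, smul_eq_mul, integral_const_mul, hH,
      integral_eval_divDiff_X_pow hint, eval_mul, eval_finsetSum, eval_C, eval_pow, eval_X]
    ring

end Polynomial

theorem stmt11_general (t η σ : ℝ) (c : ℕ → ℝ)
    (H : Module.End ℝ (Polynomial ℝ))
    (hH : ∀ n : ℕ, H (X ^ n) =
      C (1 / (1 + σ * t)) * (1 + C η * X + C σ * X ^ 2) *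
        ∑ k ∈ Icc 1 n, C (c k) * X ^ (n - k))
    (ν : Measure ℝ) (hprob : IsProbabilityMeasure ν)
    (hsupp : ∃ K : Set ℝ, IsCompact K ∧ ν Kᶜ = 0)
    (hmom : ∀ k : ℕ, 1 ≤ k → ∫ y : ℝ, y ^ (k - 1) ∂ν = c k) :
    ∀ (p : Polynomial ℝ) (q : MvPolynomial (Fin 2) ℝ),
      (∀ x y : ℝ, p.eval y - p.eval x = (y - x) * MvPolynomial.eval ![x, y] q) →
      ∀ x : ℝ, (H p).eval x =
        ((1 + η * x + σ * x ^ 2) / (1 + σ * t)) *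
          ∫ y : ℝ, MvPolynomial.eval ![x, y] q ∂ν := by
  intro p q hq x
  obtain ⟨K, hK, hνK⟩ := hsupp
  have hint : ∀ r : ℝ[X], Integrable (fun y => r.eval y) ν :=
    fun r => r.continuous.integrable_of_measure_compl_eq_zero hK hνK
  have hH' : ∀ n, H (X ^ n) = C (1 / (1 + σ * t)) * (1 + C η * X + C σ * X ^ 2) *
      ∑ j ∈ range n, C (∫ y, y ^ j ∂ν) * X ^ (n - 1 - j) := by
    intro n
    rw [hH, sum_Icc_one_eq_sum_range]
    refine congrArg _ (sum_congr rfl fun j _ => ?_)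
    rw [← hmom (j + 1) le_add_self, Nat.add_sub_cancel, Nat.sub_sub, add_comm 1 j]
  simp_rw [← eval_divDiff_eq_of_sub_eq_mul (hq x), eval_eq_mul_integral_eval_divDiff hint hH']
  simp only [eval_mul, eval_C, eval_add, eval_one, eval_X, eval_pow]
  ring

/-- Integral representation of `H_t`: if `ν` is a compactly supported probability
measure with moments `∫ y^{k−1} dν = c_k`, then for every polynomial `p` and real `x`,
`H_t(p)(x) = ((1+ηx+σx²)/(1+σt))·∫ q_p(x,y) dν(y)`, where `q_p` is the divided
difference polynomial with `p(y) − p(x) = (y−x)·q_p(x,y)`. -/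
theorem stmt11 (t η θ σ τ : ℝ) (ht : 0 < t) (hσ : 0 ≤ σ) (hτ : 0 ≤ τ)
    (hστ : σ * τ ≠ 1) (c : ℕ → ℝ) (hc1 : c 1 = 1)
    (hc : ∀ k : ℕ, 1 ≤ k →
      (1 + σ * t) * c (k + 1) =
        (θ - η * t) * c k +
          (t + τ) * ((∑ j ∈ Ico 1 k, c j * c (k - j)) +
            η * ∑ j ∈ range k, c (j + 1) * c (k - j) +
            σ * ∑ j ∈ range k, c (j + 2) * c (k - j)))
    (H : Module.End ℝ (Polynomial ℝ))
    (hH : ∀ n : ℕ, H (X ^ n) =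
      C (1 / (1 + σ * t)) * (1 + C η * X + C σ * X ^ 2) *
        ∑ k ∈ Icc 1 n, C (c k) * X ^ (n - k))
    (ν : Measure ℝ) (hprob : IsProbabilityMeasure ν)
    (hsupp : ∃ K : Set ℝ, IsCompact K ∧ ν Kᶜ = 0)
    (hmom : ∀ k : ℕ, 1 ≤ k → ∫ y : ℝ, y ^ (k - 1) ∂ν = c k) :
    ∀ (p : Polynomial ℝ) (q : MvPolynomial (Fin 2) ℝ),
      (∀ x y : ℝ, p.eval y - p.eval x = (y - x) * MvPolynomial.eval ![x, y] q) →
      ∀ x : ℝ, (H p).eval x =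
        ((1 + η * x + σ * x ^ 2) / (1 + σ * t)) *
          ∫ y : ℝ, MvPolynomial.eval ![x, y] q ∂ν :=
  stmt11_general t η σ c H hH ν hprob hsupp hmom
end

section
/- Let θ ≠ 0 be real, let H be the ℝ-linear operator on ℝ[X] given by H(p) = (p(X+θ) − p)/θ, and define the ℝ-linear operator A on ℝ[X] by A(p) = (p(X+θ) − p − θ·p′)/θ², where p(X+θ) is the composition of p with X+θ and p′ its derivative. Then A(1) = 0 and A∘F − F∘A = H; consequently A is the unique ℝ-linear operator with these two properties. -/
/-!
Since `(X * p)(X + θ) = (X + θ) * p(X + θ)` and `(X * p)' = p + X * p'`, the commutator of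
`p ↦ p(X + θ) - p - θ p'` with multiplication by `X` is `p ↦ θ (p(X + θ) - p)`; dividing by `θ²`
gives `A ∘ F - F ∘ A = H`. For uniqueness, the difference of two solutions commutes with
multiplication by `X`, hence is `ℝ[X]`-linear, i.e. multiplication by its value at `1`, which is `0`.
-/

open Polynomial

namespace Polynomial

variable {R : Type*}

theorem map_X_mul_of_commute_mulLeft_X [CommSemiring R] {D : Module.End R R[X]}
    (hD : Commute D (LinearMap.mulLeft R X)) (p : R[X]) : D (X * p) = X * D p :=
  LinearMap.congr_fun hD.eq p

theorem apply_eq_mul_map_one_of_commute_mulLeft_X [CommSemiring R] {D : Module.End R R[X]}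
    (hD : Commute D (LinearMap.mulLeft R X)) (p : R[X]) : D p = p * D 1 := by
  induction p using Polynomial.induction_on with
  | C a => rw [← mul_one (C a), C_mul', map_smul, smul_mul_assoc, one_mul]
  | add p q hp hq => rw [map_add, hp, hq, add_mul]
  | monomial n a ih =>
    rw [pow_succ', mul_left_comm, map_X_mul_of_commute_mulLeft_X hD, ih]
    ring

theorem endomorphism_eq_of_map_one_eq_of_commutator_eq [CommRing R] {B B' : Module.End R R[X]}
    (h1 : B 1 = B' 1)
    (h : B * LinearMap.mulLeft R X - LinearMap.mulLeft R X * B =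
      B' * LinearMap.mulLeft R X - LinearMap.mulLeft R X * B') :
    B = B' := by
  have hD : Commute (B - B') (LinearMap.mulLeft R X) := by
    rw [commute_iff_eq, ← sub_eq_zero, sub_mul, mul_sub, ← sub_eq_zero.mpr h]
    abel
  refine sub_eq_zero.mp (LinearMap.ext fun p => ?_)
  rw [apply_eq_mul_map_one_of_commute_mulLeft_X hD, LinearMap.sub_apply, h1, sub_self, mul_zero,
    LinearMap.zero_apply]

theorem comp_X_add_C_sub_sub_derivative_X_mul [CommRing R] (θ : R) (p : R[X]) :
    ((X * p).comp (X + C θ) - X * p - C θ * derivative (X * p)) -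
      X * (p.comp (X + C θ) - p - C θ * derivative p) = C θ * (p.comp (X + C θ) - p) := by
  rw [mul_comp, X_comp, derivative_mul, derivative_X]
  ring

end Polynomial

theorem stmt14_general (θ : ℝ)
    (H : Module.End ℝ (Polynomial ℝ))
    (hH : ∀ p : Polynomial ℝ, H p = Polynomial.C (1 / θ) * (p.comp (X + Polynomial.C θ) - p))
    (A : Module.End ℝ (Polynomial ℝ))
    (hA : ∀ p : Polynomial ℝ, A p = Polynomial.C (1 / θ ^ 2) *
      (p.comp (X + Polynomial.C θ) - p - Polynomial.C θ * derivative p)) :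
    A 1 = 0 ∧ A * F - F * A = H ∧
      ∀ A' : Module.End ℝ (Polynomial ℝ), A' 1 = 0 → A' * F - F * A' = H → A' = A := by
  have hA1 : A 1 = 0 := by simp [hA]
  have hAF : A * F - F * A = H := by
    refine LinearMap.ext fun p => ?_
    -- `1 / θ = θ / θ ^ 2` holds also at `θ = 0`, where `1 / 0 = 0`
    have hC : C (1 / θ) = C (1 / θ ^ 2) * C θ := by rw [← C_mul]; field_simp
    rw [hH, hC, mul_assoc, ← comp_X_add_C_sub_sub_derivative_X_mul, mul_sub]
    simp only [LinearMap.sub_apply, Module.End.mul_apply, F, LinearMap.mulLeft_apply, hA]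
    ring
  exact ⟨hA1, hAF, fun A' hA'1 hA'F =>
    endomorphism_eq_of_map_one_eq_of_commutator_eq (hA'1.trans hA1.symm) (hA'F.trans hAF.symm)⟩

/-- For `θ ≠ 0` and `H(p) = (p(X+θ) − p)/θ`, the operator
`A(p) = (p(X+θ) − p − θ·p′)/θ²` satisfies `A 1 = 0` and `A∘F − F∘A = H`, and `A` is the
unique operator with these two properties. -/
theorem stmt14 (θ : ℝ) (hθ : θ ≠ 0)
    (H : Module.End ℝ (Polynomial ℝ))
    (hH : ∀ p : Polynomial ℝ, H p = Polynomial.C (1 / θ) * (p.comp (X + Polynomial.C θ) - p))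
    (A : Module.End ℝ (Polynomial ℝ))
    (hA : ∀ p : Polynomial ℝ, A p = Polynomial.C (1 / θ ^ 2) *
      (p.comp (X + Polynomial.C θ) - p - Polynomial.C θ * derivative p)) :
    A 1 = 0 ∧ A * F - F * A = H ∧
      ∀ A' : Module.End ℝ (Polynomial ℝ), A' 1 = 0 → A' * F - F * A' = H → A' = A :=
  stmt14_general θ H hH A hA
end

section
/- Fix reals η, θ, t with s := θ − tη ≠ 0, and define the ℝ-linear operator H on ℝ[X] by H(p) = (1+ηX)·(p(X+s) − p)/s, where p(X+s) denotes the composition of p with X+s. Then H∘F − F∘H = id + η·F + s·H. -/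
/- The forward difference `Δ p = p(X+s) - p` obeys the twisted Leibniz rule
`Δ(X p) = X Δp + s p(X+s)`. Multiplying by `(1+ηX)/s` gives `H(Xp) = X H p + (1+ηX) p(X+s)`,
and writing `p(X+s) = p + s (Δp / s)` turns the last term into `p + ηXp + s H p`. -/

open Polynomial

theorem mul_X_comp_X_add_C_sub {R : Type*} [CommRing R] (p : R[X]) (s : R) :
    (X * p).comp (X + C s) - X * p = X * (p.comp (X + C s) - p) + C s * p.comp (X + C s) := by
  simp only [mul_comp, X_comp]
  ring

theorem apply_mul_X_sub_mul_X_apply {K : Type*} [Field K] (η s : K) (hs : s ≠ 0)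
    (H : K[X] → K[X])
    (hH : ∀ p, H p = (1 + C η * X) * (C (1 / s) * (p.comp (X + C s) - p))) (p : K[X]) :
    H (X * p) - X * H p = p + C η * (X * p) + C s * H p := by
  have hCs : C (1 / s) * C s = 1 := by rw [← C_mul, one_div_mul_cancel hs, C_1]
  rw [hH, hH, mul_X_comp_X_add_C_sub]
  linear_combination (1 + C η * X) * p * hCs

theorem stmt15_general (η s : ℝ) (hs0 : s ≠ 0)
    (H : Module.End ℝ (Polynomial ℝ))
    (hH : ∀ p : Polynomial ℝ, H p = (1 + Polynomial.C η * X) *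
      (Polynomial.C (1 / s) * (p.comp (X + Polynomial.C s) - p))) :
    H * F - F * H = 1 + η • F + s • H := by
  refine LinearMap.ext fun p => ?_
  simpa [F, smul_eq_C_mul] using apply_mul_X_sub_mul_X_apply η s hs0 H hH p

/-- For `s = θ − tη ≠ 0`, the operator `H(p) = (1+ηX)·(p(X+s) − p)/s` satisfies the
commutation equation `H∘F − F∘H = id + η·F + s·H`. -/
theorem stmt15 (η θ t s : ℝ) (hs : s = θ - t * η) (hs0 : s ≠ 0)
    (H : Module.End ℝ (Polynomial ℝ))
    (hH : ∀ p : Polynomial ℝ, H p = (1 + Polynomial.C η * X) *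
      (Polynomial.C (1 / s) * (p.comp (X + Polynomial.C s) - p))) :
    H * F - F * H = 1 + η • F + s • H :=
  stmt15_general η s hs0 H hH
end

section
/- Let (c_k)_{k≥1} be any real sequence and let d denote the derivative operator on ℝ[X]. Define the ℝ-linear operators H and A on ℝ[X] by H(p) = Σ_{k≥1} (c_k/k!)·d^k(p) and A(p) = Σ_{m≥1} (c_m/(m+1)!)·d^{m+1}(p) (both sums have only finitely many nonzero terms for each polynomial p). Then A(1) = 0 and A∘F − F∘A = H. -/
/-! Both sums may be cut off at degree `deg p + 1` on `p` and on `X p`. Termwise, Leibniz' rule gives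
`d^(m+1) ∘ F - F ∘ d^(m+1) = (m+1) d^m`, and `(m+1)/(m+1)! = 1/m!` turns the `m`-th term of
`A ∘ F - F ∘ A` into the `m`-th term of `H`. -/

open Polynomial Finset

/-- The derivative operator on `ℝ[X]`, as a module endomorphism. -/
noncomputable def d : Module.End ℝ (Polynomial ℝ) := Polynomial.derivative

lemma natDegree_F_le (p : ℝ[X]) : (F p).natDegree ≤ p.natDegree + 1 := by
  change (X * p).natDegree ≤ _
  rw [add_comm]
  exact natDegree_mul_le.trans (add_le_add_left natDegree_X_le _)

lemma d_pow_succ_mul_F_sub (m : ℕ) : d ^ (m + 1) * F - F * d ^ (m + 1) = ((m : ℝ) + 1) • d ^ m := by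
  refine LinearMap.ext fun p => ?_
  have leibniz := iterate_derivative_mul_X (R := ℝ) (n := m + 1) p
  simp only [LinearMap.sub_apply, Module.End.mul_apply, LinearMap.smul_apply,
    Module.End.pow_apply, F, d, LinearMap.mulLeft_apply, mul_comm X] at leibniz ⊢
  rw [leibniz, add_sub_cancel_left, Nat.add_sub_cancel, ← Nat.cast_smul_eq_nsmul ℝ]
  push_cast
  rfl

lemma div_factorial_succ_mul {K : Type*} [Field K] [CharZero K] (a : K) (m : ℕ) :
    a / (m + 1).factorial * ((m : K) + 1) = a / m.factorial := by
  rw [Nat.factorial_succ]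
  push_cast
  field_simp

/-- If `H = Σ_{k≥1} (c_k/k!)·d^k` and `A = Σ_{m≥1} (c_m/(m+1)!)·d^{m+1}` (the sums being
finite on each polynomial), then `A 1 = 0` and `A∘F − F∘A = H`. -/
theorem stmt17 (c : ℕ → ℝ)
    (H A : Module.End ℝ (Polynomial ℝ))
    (hH : ∀ (p : Polynomial ℝ) (n : ℕ), p.natDegree ≤ n →
      H p = ∑ k ∈ Icc 1 n, (c k / (Nat.factorial k : ℝ)) • (d ^ k) p)
    (hA : ∀ (p : Polynomial ℝ) (n : ℕ), p.natDegree ≤ n →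
      A p = ∑ m ∈ Icc 1 n, (c m / (Nat.factorial (m + 1) : ℝ)) • (d ^ (m + 1)) p) :
    A 1 = 0 ∧ A * F - F * A = H := by
  refine ⟨by simpa using hA 1 0 (by simp), LinearMap.ext fun p => ?_⟩
  have hp : p.natDegree ≤ p.natDegree + 1 := Nat.le_succ _
  rw [LinearMap.sub_apply, Module.End.mul_apply, Module.End.mul_apply,
    hA _ _ (natDegree_F_le p), hA _ _ hp, hH _ _ hp, map_sum, ← sum_sub_distrib]
  refine sum_congr rfl fun m _ => ?_
  rw [map_smul, ← smul_sub, ← Module.End.mul_apply, ← Module.End.mul_apply, ← LinearMap.sub_apply,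
    d_pow_succ_mul_F_sub, LinearMap.smul_apply, smul_smul, div_factorial_succ_mul]
end
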